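/- arXiv:1903.07155 — 3 statements merged into one kernel-verified Lean document; each statement's English description precedes it below -/
import Mathlib

section
/- Let φ : ℕ → ℕ be an increasing function with φ(n) → ∞ and φ(n)/n → 0 as n → ∞. Then there exists a central Cantor set E ⊆ [0,1] such that, letting Φ be the dimension function associated with the depth function φ and the set E (so that R^{1+Φ(R)} = s_{n+φ(n)} for R ∈ (s_{n+1}, s_n]), and setting Φ_t = tΦ for t > 0, one has dim̄_{Φ_t} E ∈ [dim_qA E, dim_A E] for every t > 0, yet lim_{t→0⁺} dim̄_{Φ_t} E < dim_A E. -/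
open Set Metric Filter Topology
open scoped ENNReal

noncomputable section

/-- The least number of closed balls of radius `r` needed to cover `E`
(`∞` if there is no finite cover). -/
def coverNumber {X : Type*} [PseudoMetricSpace X] (r : ℝ) (E : Set X) : ℝ≥0∞ :=
  ⨅ (s : Finset X) (_ : E ⊆ ⋃ x ∈ s, closedBall x r), (s.card : ℝ≥0∞)

/-- `Φ : (0,1) → [0,∞)` is a dimension function if `x ^ (1 + Φ x)` decreases to `0`
as `x` decreases to `0`. -/
def IsDimensionFunction (Φ : ℝ → ℝ) : Prop :=
  (∀ x ∈ Ioo (0:ℝ) 1, 0 ≤ Φ x) ∧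
  (∀ x ∈ Ioo (0:ℝ) 1, ∀ y ∈ Ioo (0:ℝ) 1, x ≤ y → x ^ (1 + Φ x) ≤ y ^ (1 + Φ y)) ∧
  Tendsto (fun x : ℝ => x ^ (1 + Φ x)) (nhdsWithin 0 (Ioo 0 1)) (nhds 0)

/-- A metric space is doubling if there is `M ≥ 1` such that every closed ball of radius `R`
can be covered by at most `M` closed balls of radius `R / 2`. -/
def IsDoublingSpace (X : Type*) [PseudoMetricSpace X] : Prop :=
  ∃ M : ℕ, 1 ≤ M ∧ ∀ (x : X) (R : ℝ), ∃ s : Finset X, s.card ≤ M ∧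
    closedBall x R ⊆ ⋃ y ∈ s, closedBall y (R / 2)

/-- The upper `Φ`-dimension. -/
def upperPhiDim {X : Type*} [PseudoMetricSpace X] (Φ : ℝ → ℝ) (E : Set X) : ℝ :=
  sInf {α : ℝ | ∃ c₁ > (0:ℝ), ∃ c₂ > (0:ℝ), ∀ r R : ℝ,
    0 < r → r ≤ R ^ (1 + Φ R) → R ^ (1 + Φ R) ≤ R → R < c₁ → ∀ z ∈ E,
      coverNumber r (closedBall z R ∩ E) ≤ ENNReal.ofReal (c₂ * (R / r) ^ α)}

/-- The lower `Φ`-dimension. -/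
def lowerPhiDim {X : Type*} [PseudoMetricSpace X] (Φ : ℝ → ℝ) (E : Set X) : ℝ :=
  sSup {α : ℝ | ∃ c₁ > (0:ℝ), ∃ c₂ > (0:ℝ), ∀ r R : ℝ,
    0 < r → r ≤ R ^ (1 + Φ R) → R ^ (1 + Φ R) ≤ R → R < c₁ → ∀ z ∈ E,
      ENNReal.ofReal (c₂ * (R / r) ^ α) ≤ coverNumber r (closedBall z R ∩ E)}

/-- The (upper) Assouad dimension: the upper `Φ`-dimension with `Φ ≡ 0`. -/
def assouadDim {X : Type*} [PseudoMetricSpace X] (E : Set X) : ℝ :=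
  upperPhiDim (fun _ => 0) E

/-- The lower Assouad dimension: the lower `Φ`-dimension with `Φ ≡ 0`. -/
def lowerAssouadDim {X : Type*} [PseudoMetricSpace X] (E : Set X) : ℝ :=
  lowerPhiDim (fun _ => 0) E

/-- The upper `θ`-Assouad spectrum: the upper `Φ`-dimension with constant `Φ = 1/θ - 1`. -/
def upperAssouadSpectrum {X : Type*} [PseudoMetricSpace X] (θ : ℝ) (E : Set X) : ℝ :=
  upperPhiDim (fun _ => 1 / θ - 1) E

/-- The lower `θ`-Assouad spectrum: the lower `Φ`-dimension with constant `Φ = 1/θ - 1`. -/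
def lowerAssouadSpectrum {X : Type*} [PseudoMetricSpace X] (θ : ℝ) (E : Set X) : ℝ :=
  lowerPhiDim (fun _ => 1 / θ - 1) E

/-- The upper quasi-Assouad dimension, `lim_{θ → 1}` of the upper `θ`-Assouad spectrum;
since the upper spectrum is nondecreasing in `θ`, this limit is the supremum over
`θ ∈ (0,1)`. -/
def quasiAssouadDim {X : Type*} [PseudoMetricSpace X] (E : Set X) : ℝ :=
  ⨆ θ : Ioo (0:ℝ) 1, upperAssouadSpectrum (θ : ℝ) E

/-- The lower quasi-Assouad dimension, `lim_{θ → 1}` of the lower `θ`-Assouad spectrum;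
since the lower spectrum is nonincreasing in `θ`, this limit is the infimum over
`θ ∈ (0,1)`. -/
def quasiLowerAssouadDim {X : Type*} [PseudoMetricSpace X] (E : Set X) : ℝ :=
  ⨅ θ : Ioo (0:ℝ) 1, lowerAssouadSpectrum (θ : ℝ) E

/-- Upper box dimension `limsup_{r → 0} log N_r(E) / |log r|`. -/
def upperBoxDim {X : Type*} [PseudoMetricSpace X] (E : Set X) : ℝ :=
  limsup (fun r : ℝ => Real.log (coverNumber r E).toReal / |Real.log r|)
    (nhdsWithin 0 (Ioo 0 1))

/-- Lower box dimension `liminf_{r → 0} log N_r(E) / |log r|`. -/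
def lowerBoxDim {X : Type*} [PseudoMetricSpace X] (E : Set X) : ℝ :=
  liminf (fun r : ℝ => Real.log (coverNumber r E).toReal / |Real.log r|)
    (nhdsWithin 0 (Ioo 0 1))




/-- The total length of the gaps eventually removed from the `j`-th (`0`-indexed, left to
right) step-`k` interval in the construction of the Cantor set associated with the gap
sequence `a` (where `a i` is the length of the `i`-th gap, `i ≥ 1`); this is the length of
that interval. -/
def cantorLen (a : ℕ → ℝ) (k j : ℕ) : ℝ :=
  ∑' m : ℕ, ∑ i ∈ Finset.range (2 ^ m), a (2 ^ (k + m) + j * 2 ^ m + i)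

/-- `C` is the Cantor set associated with the gap sequence `a` (gaps `a 1, a 2, …`,
the gap removed at step `k+1` from the `j`-th (`0`-indexed) step-`k` interval having length
`a (2^k + j)`): there are left endpoints `L k j` of the step-`k` intervals, each interval
has length `cantorLen a k j`, the construction starts at `[0,1]` with `L 0 0 = 0`, and
removing the appropriate gap from a step-`k` interval yields its two step-`(k+1)`
subintervals. -/
def IsCantorSetOf (a : ℕ → ℝ) (C : Set ℝ) : Prop :=
  ∃ L : ℕ → ℕ → ℝ, L 0 0 = 0 ∧
    (∀ k j, j < 2 ^ k → L (k + 1) (2 * j) = L k j) ∧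
    (∀ k j, j < 2 ^ k →
      L (k + 1) (2 * j + 1) = L k j + cantorLen a (k + 1) (2 * j) + a (2 ^ k + j)) ∧
    C = ⋂ k : ℕ, ⋃ j ∈ Finset.range (2 ^ k), Icc (L k j) (L k j + cantorLen a k j)

/-- `s n = 2⁻ⁿ Σ_{j ≥ 2ⁿ} a j`, the average length of the step-`n` intervals. -/
def sSeq (a : ℕ → ℝ) (n : ℕ) : ℝ :=
  ((2 : ℝ) ^ n)⁻¹ * ∑' i : ℕ, a (2 ^ n + i)

/-- The depth function `φ` associated with the dimension function `Φ` and the Cantor set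
with gap sequence `a`: `φ n` is the minimal integer `j` with
`s (n + j) ≤ (s n) ^ (1 + Φ (s n))`. -/
def IsDepthFunction (a : ℕ → ℝ) (Φ : ℝ → ℝ) (φ : ℕ → ℕ) : Prop :=
  ∀ n : ℕ, IsLeast {j : ℕ | sSeq a (n + j) ≤ sSeq a n ^ (1 + Φ (sSeq a n))} (φ n)

/-- The gap sequence of the central Cantor set with step lengths `s`: every gap of level
`n+1` (indices `2^n ≤ i < 2^(n+1)`) has length `s n - 2 * s (n+1)`. -/
def centralGaps (s : ℕ → ℝ) : ℕ → ℝ :=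
  fun i => s (Nat.log 2 i) - 2 * s (Nat.log 2 i + 1)

/-- `E` is a central Cantor set with step lengths `s`: `s 0 = 1`, the ratios of dissection
`s (n+1) / s n` lie in `(0, 1/2)`, and `E` is the Cantor set whose step-`(n+1)` gaps all
have length `s n - 2 * s (n+1)`. -/
def IsCentralCantorSet (s : ℕ → ℝ) (E : Set ℝ) : Prop :=
  s 0 = 1 ∧ (∀ n, 0 < s (n + 1) ∧ 2 * s (n + 1) < s n) ∧ IsCantorSetOf (centralGaps s) E

/-- `E` belongs to `𝒞_a`: `E = [0,1] \ ⋃ⱼ Uⱼ` for a disjoint family of open subintervals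
`Uⱼ ⊆ [0,1]` with `length Uⱼ = a j` (`j ≥ 1`). -/
def IsComplementarySet (a : ℕ → ℝ) (E : Set ℝ) : Prop :=
  ∃ c : ℕ → ℝ, (∀ j, 0 ≤ c j ∧ c j + a (j + 1) ≤ 1) ∧
    (Pairwise fun i j =>
      Disjoint (Ioo (c i) (c i + a (i + 1))) (Ioo (c j) (c j + a (j + 1)))) ∧
    E = Icc 0 1 \ ⋃ j : ℕ, Ioo (c j) (c j + a (j + 1))

/-- The decreasing rearrangement `D_a = {Σ_{i ≥ k} a i : k = 1, 2, …}`. -/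
def decreasingSet (a : ℕ → ℝ) : Set ℝ :=
  Set.range fun k : ℕ => ∑' i : ℕ, a (k + 1 + i)



/-!
The set `E` has ratio of dissection `1/4` along runs of `k` consecutive steps, one run for each
`k`, and `1/8` at all other steps. A run of length `k` starting at step `n` gives `2 ^ k` points of
`E` in a ball of radius `s n` that are `s n / 4 ^ k`-separated, so `dim_A E ≥ 1/2`.

The `k`-th run starts far beyond the earlier ones and where `φ ≥ k ^ 2`. For `R ∈ (s (n + 1), s n]`
and `r ≤ R ^ (1 + t Φ R)` there are at least `2 t φ n / 3` steps between the scales `R` and `r`,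
and in any such window at most about half of the steps belong to runs: either the window is long
compared with the start of the last run it meets, or it meets a single run, of length at most
`√(φ n)`. So at least half of these steps have ratio `1/8`, whence
`N_r(B(z, R) ∩ E) ≲ (R / r) ^ (2/5)` and the upper `tΦ`-dimension is at most `2/5` for `t ≤ 1`.
As `Φ ≥ 0` and `Φ → 0` at `0`, the upper `tΦ`-dimensions lie between `dim_qA E` and `dim_A E`
and decrease in `t`, so they converge as `t → 0⁺`, to at most `2/5`.
-/

section CoverNumber

variable {X : Type*} [PseudoMetricSpace X]

lemma coverNumber_le_card {r : ℝ} {E : Set X} (t : Finset X)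
    (h : E ⊆ ⋃ x ∈ t, closedBall x r) : coverNumber r E ≤ t.card :=
  (iInf_le _ t).trans (iInf_le _ h)

lemma card_le_coverNumber {ι : Type*} {r : ℝ} {E : Set X} (s : Finset ι) (x : ι → X)
    (hx : ∀ i ∈ s, x i ∈ E) (hsep : ∀ i ∈ s, ∀ j ∈ s, i ≠ j → 2 * r < dist (x i) (x j)) :
    (s.card : ℝ≥0∞) ≤ coverNumber r E := by
  refine le_iInf₂ fun t ht => ?_
  have hcov : ∀ i, ∃ c, i ∈ s → c ∈ t ∧ dist (x i) c ≤ r := fun i => by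
    by_cases hi : i ∈ s
    · obtain ⟨c, hc, hxc⟩ := mem_iUnion₂.1 (ht (hx i hi))
      exact ⟨c, fun _ => ⟨hc, hxc⟩⟩
    · exact ⟨x i, fun h => absurd h hi⟩
  choose c hc using hcov
  refine Nat.cast_le.2 (Finset.card_le_card_of_injOn c (fun i hi => (hc i hi).1)
    fun i hi j hj hij => ?_)
  by_contra hne
  have := dist_triangle_right (x i) (x j) (c i)
  linarith [hsep i hi j hj hne, (hc i hi).2, hij ▸ (hc j hj).2]

lemma one_le_coverNumber {r : ℝ} {E : Set X} (hE : E.Nonempty) : 1 ≤ coverNumber r E := by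
  obtain ⟨x, hx⟩ := hE
  simpa using card_le_coverNumber (r := r) ({()} : Finset Unit) (fun _ => x) (by simpa) (by simp)

end CoverNumber

section UpperPhiDim

variable {X : Type*} [PseudoMetricSpace X]

def upperPhiDimSet (Φ : ℝ → ℝ) (E : Set X) : Set ℝ :=
  {α : ℝ | ∃ c₁ > (0:ℝ), ∃ c₂ > (0:ℝ), ∀ r R : ℝ,
    0 < r → r ≤ R ^ (1 + Φ R) → R ^ (1 + Φ R) ≤ R → R < c₁ → ∀ z ∈ E,
      coverNumber r (closedBall z R ∩ E) ≤ ENNReal.ofReal (c₂ * (R / r) ^ α)}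

lemma upperPhiDim_eq_sInf (Φ : ℝ → ℝ) (E : Set X) :
    upperPhiDim Φ E = sInf (upperPhiDimSet Φ E) := rfl

lemma upperPhiDimSet_subset {Φ₁ Φ₂ : ℝ → ℝ} {E : Set X}
    (h : ∀ᶠ R in 𝓝[>] 0, 0 ≤ Φ₁ R ∧ Φ₁ R ≤ Φ₂ R) :
    upperPhiDimSet Φ₁ E ⊆ upperPhiDimSet Φ₂ E := by
  rintro α ⟨c₁, hc₁, c₂, hc₂, hα⟩
  obtain ⟨c, hc, hΦ⟩ := (nhdsGT_basis (0:ℝ)).eventually_iff.1 (h.and (Ioo_mem_nhdsGT one_pos))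
  refine ⟨min c₁ c, lt_min hc₁ hc, c₂, hc₂, fun r R hr hrR hR hRc z hz => ?_⟩
  have hR0 : 0 < R := hr.trans_le (hrR.trans hR)
  obtain ⟨⟨h0, h12⟩, -, hR1⟩ := hΦ ⟨hR0, hRc.trans_le (min_le_right _ _)⟩
  have h21 : R ^ (1 + Φ₂ R) ≤ R ^ (1 + Φ₁ R) :=
    Real.rpow_le_rpow_of_exponent_ge hR0 (le_of_lt hR1) (by linarith)
  have h1 : R ^ (1 + Φ₁ R) ≤ R := by
    simpa using Real.rpow_le_rpow_of_exponent_ge hR0 (le_of_lt hR1) (by linarith : 1 ≤ 1 + Φ₁ R)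
  exact hα r R hr (hrR.trans h21) h1 (hRc.trans_le (min_le_left _ _)) z hz

/-- A negative exponent is excluded by letting `r → 0` with `R` fixed. -/
lemma upperPhiDimSet_subset_Ici {Φ : ℝ → ℝ} {E : Set X} (hE : E.Nonempty)
    (h : ∀ᶠ R in 𝓝[>] 0, 0 ≤ Φ R) : upperPhiDimSet Φ E ⊆ Ici 0 := by
  rintro α ⟨c₁, hc₁, c₂, hc₂, hα⟩
  by_contra hneg
  rw [mem_Ici, not_le] at hneg
  obtain ⟨z, hz⟩ := hE
  obtain ⟨R, hΦR, hR0, hRc⟩ := (h.and (Ioo_mem_nhdsGT (lt_min hc₁ one_pos))).exists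
  have hR1 : R < 1 := hRc.trans_le (min_le_right _ _)
  have hT0 : 0 < R ^ (1 + Φ R) := Real.rpow_pos_of_pos hR0 _
  have hTR : R ^ (1 + Φ R) ≤ R := by
    simpa using Real.rpow_le_rpow_of_exponent_ge hR0 hR1.le (by linarith : 1 ≤ 1 + Φ R)
  have hlim : Tendsto (fun r => c₂ * (R / r) ^ α) (𝓝[>] 0) (𝓝 0) := by
    have hdiv : Tendsto (fun r : ℝ => R / r) (𝓝[>] 0) atTop := by
      simpa only [div_eq_mul_inv] using tendsto_inv_nhdsGT_zero.const_mul_atTop hR0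
    simpa using ((tendsto_rpow_neg_atTop (neg_pos.2 hneg)).comp hdiv).const_mul c₂
  obtain ⟨r, hr1, hr0, hrT⟩ :=
    ((hlim.eventually (gt_mem_nhds one_pos)).and (Ioc_mem_nhdsGT hT0)).exists
  have hcov := (one_le_coverNumber (r := r) (E := closedBall z R ∩ E)
    ⟨z, mem_closedBall_self hR0.le, hz⟩).trans
    (hα r R hr0 hrT hTR (hRc.trans_le (min_le_left _ _)) z hz)
  exact (not_le.2 hr1) (ENNReal.one_le_ofReal.1 hcov)

lemma upperPhiDim_le_of_mem {Φ : ℝ → ℝ} {E : Set X} {α : ℝ} (hE : E.Nonempty)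
    (h : ∀ᶠ R in 𝓝[>] 0, 0 ≤ Φ R) (hα : α ∈ upperPhiDimSet Φ E) : upperPhiDim Φ E ≤ α :=
  csInf_le ⟨0, upperPhiDimSet_subset_Ici hE h⟩ hα

lemma upperPhiDim_le_upperPhiDim {Φ₁ Φ₂ : ℝ → ℝ} {E : Set X} (hE : E.Nonempty)
    (h : ∀ᶠ R in 𝓝[>] 0, 0 ≤ Φ₁ R ∧ Φ₁ R ≤ Φ₂ R) (hne : (upperPhiDimSet Φ₁ E).Nonempty) :
    upperPhiDim Φ₂ E ≤ upperPhiDim Φ₁ E := by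
  rw [upperPhiDim_eq_sInf, upperPhiDim_eq_sInf]
  refine csInf_le_csInf ?_ hne (upperPhiDimSet_subset h)
  exact ⟨0, upperPhiDimSet_subset_Ici hE (h.mono fun _ hR => hR.1.trans hR.2)⟩

variable {Φ : ℝ → ℝ} {E : Set X} (hE : E.Nonempty)
  (hA : (upperPhiDimSet (fun _ => 0) E).Nonempty) (hΦ₀ : ∀ᶠ R in 𝓝[>] 0, 0 ≤ Φ R)
include hA hΦ₀

omit hE in
lemma upperPhiDimSet_mul_nonempty {t : ℝ} (ht : 0 ≤ t) :
    (upperPhiDimSet (fun x => t * Φ x) E).Nonempty :=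
  hA.mono (upperPhiDimSet_subset (hΦ₀.mono fun _ h => ⟨le_rfl, mul_nonneg ht h⟩))

include hE

lemma antitoneOn_upperPhiDim_mul :
    AntitoneOn (fun t => upperPhiDim (fun x => t * Φ x) E) (Ioi 0) := fun _ ht₁ _ _ h =>
  upperPhiDim_le_upperPhiDim hE
    (hΦ₀.mono fun _ hR => ⟨mul_nonneg (le_of_lt ht₁) hR, mul_le_mul_of_nonneg_right h hR⟩)
    (upperPhiDimSet_mul_nonempty hA hΦ₀ (le_of_lt ht₁))

lemma upperPhiDim_mul_mem_Icc (hΦ : Tendsto Φ (𝓝[>] 0) (𝓝 0)) {t : ℝ} (ht : 0 < t) :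
    upperPhiDim (fun x => t * Φ x) E ∈ Icc (quasiAssouadDim E) (assouadDim E) := by
  have _ : Nonempty (Ioo (0:ℝ) 1) := nonempty_Ioo_subtype one_pos
  refine ⟨ciSup_le fun θ => upperPhiDim_le_upperPhiDim hE ?_
    (upperPhiDimSet_mul_nonempty hA hΦ₀ ht.le), upperPhiDim_le_upperPhiDim hE
      (hΦ₀.mono fun _ h => ⟨le_rfl, mul_nonneg ht.le h⟩) hA⟩
  have hθ : t * 0 < 1 / (θ : ℝ) - 1 := by
    rw [mul_zero, sub_pos, one_lt_div θ.2.1]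
    exact θ.2.2
  exact (hΦ₀.and ((hΦ.const_mul t).eventually (eventually_le_nhds hθ))).mono
    fun _ h => ⟨mul_nonneg ht.le h.1, h.2⟩

end UpperPhiDim

lemma AntitoneOn.exists_le_tendsto_nhdsGT {F : ℝ → ℝ} {a c b : ℝ} (hac : a < c)
    (hF : AntitoneOn F (Ioo a c)) (hb : ∀ t ∈ Ioo a c, F t ≤ b) :
    ∃ ℓ ≤ b, Tendsto F (𝓝[>] a) (𝓝 ℓ) :=
  ⟨_, csSup_le ((nonempty_Ioo.2 hac).image F) (forall_mem_image.2 hb),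
    hF.tendsto_nhdsWithin_Ioo_right (nonempty_Ioo.2 hac) ⟨b, forall_mem_image.2 hb⟩⟩

section CentralCantor

variable (s : ℕ → ℝ)

/-- The binary digits of `j` (most significant first) choose the left or right subinterval at
each step, so `cantorLeft s k j` is the left endpoint of the `j`-th step-`k` interval. -/
def cantorLeft : ℕ → ℕ → ℝ
  | 0, _ => 0
  | k + 1, j => cantorLeft k (j / 2) + if j % 2 = 1 then s k - s (k + 1) else 0

def cantorInterval (k j : ℕ) : Set ℝ := Icc (cantorLeft s k j) (cantorLeft s k j + s k)

def centralCantor : Set ℝ := ⋂ k, ⋃ j ∈ Finset.range (2 ^ k), cantorInterval s k j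

variable {s}

lemma cantorLeft_zero_right (k : ℕ) : cantorLeft s k 0 = 0 := by
  induction k with
  | zero => rfl
  | succ k ih => simp [cantorLeft, ih]

lemma cantorLeft_two_mul (k j : ℕ) : cantorLeft s (k + 1) (2 * j) = cantorLeft s k j := by
  simp [cantorLeft]

lemma cantorLeft_two_mul_add_one (k j : ℕ) :
    cantorLeft s (k + 1) (2 * j + 1) = cantorLeft s k j + (s k - s (k + 1)) := by
  simp [cantorLeft, show (2 * j + 1) / 2 = j by omega]

lemma cantorLeft_mul_two_pow (k d j : ℕ) :
    cantorLeft s (k + d) (j * 2 ^ d) = cantorLeft s k j := by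
  induction d with
  | zero => simp
  | succ d ih => rw [pow_succ, ← mul_assoc, mul_comm _ 2, ← add_assoc, cantorLeft_two_mul, ih]

lemma mem_centralCantor {z : ℝ} :
    z ∈ centralCantor s ↔ ∀ k, ∃ j < 2 ^ k, z ∈ cantorInterval s k j := by
  simp [centralCantor]

lemma exists_mem_Ioc_of_tendsto_zero (hs : Tendsto s atTop (𝓝 0)) {R : ℝ} (hR0 : 0 < R)
    (hR : R ≤ s 0) : ∃ n, R ∈ Ioc (s (n + 1)) (s n) := by
  classical
  have hex : ∃ n, s n < R := (hs.eventually (gt_mem_nhds hR0)).exists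
  obtain ⟨n, hn⟩ : ∃ n, Nat.find hex = n + 1 :=
    Nat.exists_eq_add_one.2 (Nat.pos_of_ne_zero fun h => (Nat.find_spec hex).not_ge (h ▸ hR))
  exact ⟨n, hn ▸ Nat.find_spec hex, not_lt.1 (Nat.find_min hex (by omega))⟩

variable (hs : ∀ n, 0 < s n) (hs4 : ∀ n, 4 * s (n + 1) ≤ s n)
include hs hs4

lemma cantorInterval_succ_subset (k j : ℕ) :
    cantorInterval s (k + 1) j ⊆ cantorInterval s k (j / 2) := by
  have := hs (k + 1)
  have := hs4 k
  unfold cantorInterval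
  rw [cantorLeft]
  split_ifs <;> exact Icc_subset_Icc (by linarith) (by linarith)

lemma cantorInterval_add_subset (k d j : ℕ) :
    cantorInterval s (k + d) j ⊆ cantorInterval s k (j / 2 ^ d) := by
  induction d generalizing j with
  | zero => simp
  | succ d ih =>
    rw [← add_assoc, pow_succ', ← Nat.div_div_eq_div_mul]
    exact (cantorInterval_succ_subset hs hs4 _ j).trans (ih _)

lemma cantorLeft_add_one_le (k : ℕ) :
    ∀ j, j + 1 < 2 ^ k → cantorLeft s k j + 3 * s k ≤ cantorLeft s k (j + 1) := by
  induction k with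
  | zero => intro j hj; simp at hj
  | succ k ih =>
    intro j hj
    have := hs (k + 1)
    have := hs4 k
    rcases Nat.even_or_odd' j with ⟨i, rfl | rfl⟩
    · rw [cantorLeft_two_mul, cantorLeft_two_mul_add_one]
      linarith
    · have := ih i (by rw [pow_succ] at hj; omega)
      rw [show 2 * i + 1 + 1 = 2 * (i + 1) by ring, cantorLeft_two_mul, cantorLeft_two_mul_add_one]
      linarith

lemma cantorLeft_add_le {k j i : ℕ} (h : j + i < 2 ^ k) :
    cantorLeft s k j + 3 * i * s k ≤ cantorLeft s k (j + i) := by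
  induction i with
  | zero => simp
  | succ i ih =>
    have := cantorLeft_add_one_le hs hs4 k (j + i) (by omega)
    rw [← add_assoc]
    push_cast
    linarith [ih (by omega)]

lemma cantorLeft_mem_centralCantor {p j : ℕ} (hj : j < 2 ^ p) :
    cantorLeft s p j ∈ centralCantor s := by
  have hleft : ∀ k j, cantorLeft s k j ∈ cantorInterval s k j := fun k j =>
    ⟨le_rfl, by linarith [hs k]⟩
  refine mem_centralCantor.2 fun k => ?_
  rcases le_or_gt k p with hk | hk
  · obtain ⟨d, rfl⟩ := Nat.exists_eq_add_of_le hk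
    refine ⟨j / 2 ^ d, Nat.div_lt_of_lt_mul (by rwa [← pow_add, add_comm]), ?_⟩
    exact cantorInterval_add_subset hs hs4 k d j (hleft _ _)
  · obtain ⟨d, rfl⟩ := Nat.exists_eq_add_of_le hk.le
    refine ⟨j * 2 ^ d, by rw [pow_add]; exact Nat.mul_lt_mul_of_pos_right hj (by positivity), ?_⟩
    simpa [cantorInterval, cantorLeft_mul_two_pow] using hleft (p + d) (j * 2 ^ d)

lemma zero_mem_centralCantor : (0:ℝ) ∈ centralCantor s :=
  cantorLeft_mem_centralCantor hs hs4 (p := 0) (j := 0) one_pos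

omit hs in
lemma four_pow_mul_le (k m : ℕ) : 4 ^ m * s (k + m) ≤ s k := by
  induction m with
  | zero => simp
  | succ m ih =>
    rw [pow_succ, ← add_assoc]
    nlinarith [hs4 (k + m), pow_pos (by norm_num : (0:ℝ) < 4) m]

lemma tendsto_two_pow_mul (k : ℕ) : Tendsto (fun m => 2 ^ m * s (k + m)) atTop (𝓝 0) := by
  refine squeeze_zero (fun m => by positivity [hs (k + m)]) (fun m => ?_)
    (by simpa using (tendsto_pow_atTop_nhds_zero_of_lt_one (by norm_num : (0:ℝ) ≤ 1 / 2)
      (by norm_num)).const_mul (s k))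
  rw [← div_eq_mul_inv, le_div_iff₀ (by positivity)]
  calc 2 ^ m * s (k + m) * 2 ^ m = 4 ^ m * s (k + m) := by
        rw [show (4:ℝ) = 2 * 2 by norm_num, mul_pow]; ring
    _ ≤ s k := four_pow_mul_le hs4 k m

lemma cantorLen_centralGaps {k j : ℕ} (hj : j < 2 ^ k) :
    cantorLen (centralGaps s) k j = s k := by
  set u : ℕ → ℝ := fun m => 2 ^ m * s (k + m)
  have hterm : ∀ m, ∑ i ∈ Finset.range (2 ^ m), centralGaps s (2 ^ (k + m) + j * 2 ^ m + i) =
      u m - u (m + 1) := by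
    intro m
    have hlog : ∀ i < 2 ^ m, Nat.log 2 (2 ^ (k + m) + j * 2 ^ m + i) = k + m := by
      intro i hi
      have : j * 2 ^ m + i < 2 ^ (k + m) := by
        rw [pow_add]; nlinarith [Nat.mul_le_mul_right (2 ^ m) (Nat.succ_le_of_lt hj)]
      exact Nat.log_eq_of_pow_le_of_lt_pow (by omega) (by rw [pow_succ]; omega)
    rw [Finset.sum_congr rfl fun i hi => by rw [centralGaps, hlog i (Finset.mem_range.1 hi)]]
    simp only [Finset.sum_const, Finset.card_range, nsmul_eq_mul, u]
    push_cast
    ring_nf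
  have hsum : HasSum (fun m => u m - u (m + 1)) (s k) := by
    have hnn : ∀ m, 0 ≤ u m - u (m + 1) := fun m => by
      simp only [u, pow_succ, ← add_assoc]
      nlinarith [hs4 (k + m), hs (k + m + 1), pow_pos (by norm_num : (0:ℝ) < 2) m]
    rw [hasSum_iff_tendsto_nat_of_nonneg hnn]
    simp only [Finset.sum_range_sub' u]
    simpa [u] using (tendsto_two_pow_mul hs hs4 k).const_sub (u 0)
  rw [cantorLen, funext hterm, hsum.tsum_eq]

lemma isCentralCantorSet_centralCantor (hs0 : s 0 = 1) :
    IsCentralCantorSet s (centralCantor s) := by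
  refine ⟨hs0, fun n => ⟨hs (n + 1), by linarith [hs4 n, hs (n + 1)]⟩,
    cantorLeft s, rfl, fun k j _ => cantorLeft_two_mul k j, fun k j hj => ?_, ?_⟩
  · have hlog : Nat.log 2 (2 ^ k + j) = k :=
      Nat.log_eq_of_pow_le_of_lt_pow (by omega) (by rw [pow_succ]; omega)
    rw [cantorLeft_two_mul_add_one, cantorLen_centralGaps hs hs4 (by rw [pow_succ]; omega),
      centralGaps, hlog]
    ring
  · refine iInter_congr fun k => iUnion₂_congr fun j hj => ?_
    rw [cantorInterval, cantorLen_centralGaps hs hs4 (Finset.mem_range.1 hj)]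

lemma tendsto_atTop_zero_of_four_mul_le : Tendsto s atTop (𝓝 0) := by
  refine squeeze_zero (fun n => (hs n).le) (fun n => ?_)
    (by simpa using tendsto_two_pow_mul hs hs4 0)
  simpa using le_mul_of_one_le_left (hs n).le (one_le_pow₀ (by norm_num : (1:ℝ) ≤ 2))

lemma le_add_one_of_dist_le {n b b' : ℕ}
    (hb : b < 2 ^ n) {x y : ℝ} (hx : x ∈ cantorInterval s n b) (hy : y ∈ cantorInterval s n b')
    (hxy : dist x y ≤ 2 * s n) : b ≤ b' + 1 := by
  by_contra! hbb
  have hgap := cantorLeft_add_le hs hs4 (k := n) (j := b') (i := b - b') (by omega)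
  rw [Nat.add_sub_cancel' (by omega)] at hgap
  have h2 : (2:ℝ) ≤ (b - b' : ℕ) := by exact_mod_cast (by omega : 2 ≤ b - b')
  rw [Real.dist_eq] at hxy
  have := le_abs_self (x - y)
  nlinarith [hx.1, hy.2, hs n]

/-- All points of the ball lie within `2 s n` of one point `x₀` of the set, so by
`le_add_one_of_dist_le` their step-`n` intervals are among the three around that of `x₀`. -/
lemma coverNumber_closedBall_inter_le
    (z : ℝ) {R r : ℝ} {n m : ℕ} (hR : R ≤ s n) (hr : s (n + m) ≤ r) :
    coverNumber r (closedBall z R ∩ centralCantor s) ≤ 3 * 2 ^ m := by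
  rcases (closedBall z R ∩ centralCantor s).eq_empty_or_nonempty with h | ⟨x₀, hx₀B, hx₀E⟩
  · rw [h]
    exact (coverNumber_le_card ∅ (empty_subset _)).trans (by simp)
  obtain ⟨b₀, hb₀, hx₀⟩ := mem_centralCantor.1 hx₀E n
  set J := Finset.Ico ((b₀ - 1) * 2 ^ m) ((b₀ + 2) * 2 ^ m)
  have hJ : J.card ≤ 3 * 2 ^ m := by
    rw [Nat.card_Ico, ← Nat.sub_mul]
    exact Nat.mul_le_mul_right _ (by omega)
  refine (coverNumber_le_card (J.image (cantorLeft s (n + m))) fun x hx => ?_).trans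
    (by exact_mod_cast Finset.card_image_le.trans hJ)
  obtain ⟨hxB, hxE⟩ := hx
  obtain ⟨j, hj, hxj⟩ := mem_centralCantor.1 hxE (n + m)
  have hxb := cantorInterval_add_subset hs hs4 n m j hxj
  have hdist : dist x x₀ ≤ 2 * s n := by
    linarith [dist_triangle_right x x₀ z, mem_closedBall.1 hxB, mem_closedBall.1 hx₀B]
  have hjb : j / 2 ^ m < 2 ^ n := Nat.div_lt_of_lt_mul (by rwa [← pow_add, add_comm])
  have h₁ := le_add_one_of_dist_le hs hs4 hjb hxb hx₀ hdist
  have h₂ := le_add_one_of_dist_le hs hs4 hb₀ hx₀ hxb (by rwa [dist_comm])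
  have hlo : b₀ - 1 ≤ j / 2 ^ m := Nat.sub_le_iff_le_add.2 h₂
  have hhi : j / 2 ^ m < b₀ + 2 := Nat.lt_add_one_of_le h₁
  have hjJ : j ∈ J := Finset.mem_Ico.2
    ⟨(Nat.mul_le_mul_right (2 ^ m) hlo).trans (Nat.div_mul_le_self j _),
      (Nat.div_lt_iff_lt_mul (by positivity)).1 hhi⟩
  refine mem_iUnion₂.2 ⟨_, Finset.mem_image_of_mem _ hjJ, ?_⟩
  rw [mem_closedBall, Real.dist_eq, abs_le]
  constructor <;> linarith [hxj.1, hxj.2]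

lemma two_pow_le_coverNumber (n m : ℕ) :
    (2 ^ m : ℝ≥0∞) ≤ coverNumber (s (n + m)) (closedBall 0 (s n) ∩ centralCantor s) := by
  have hm : 2 ^ m ≤ 2 ^ (n + m) := Nat.pow_le_pow_right two_pos (by omega)
  have hsep : ∀ i j, i < j → j < 2 ^ (n + m) →
      2 * s (n + m) < dist (cantorLeft s (n + m) i) (cantorLeft s (n + m) j) := by
    intro i j hij hj
    have hgap := cantorLeft_add_le hs hs4 (k := n + m) (j := i) (i := j - i) (by omega)
    rw [Nat.add_sub_cancel' hij.le] at hgap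
    have h1 : (1:ℝ) ≤ (j - i : ℕ) := by exact_mod_cast (by omega : 1 ≤ j - i)
    rw [dist_comm, Real.dist_eq]
    nlinarith [le_abs_self (cantorLeft s (n + m) j - cantorLeft s (n + m) i), hs (n + m)]
  have hmem : ∀ i ∈ Finset.range (2 ^ m),
      cantorLeft s (n + m) i ∈ closedBall 0 (s n) ∩ centralCantor s := by
    intro i hi
    rw [Finset.mem_range] at hi
    refine ⟨?_, cantorLeft_mem_centralCantor hs hs4 (by omega)⟩
    have hI := cantorInterval_add_subset hs hs4 n m i ⟨le_rfl, by linarith [hs (n + m)]⟩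
    rw [Nat.div_eq_of_lt hi, cantorInterval, cantorLeft_zero_right] at hI
    rw [mem_closedBall, Real.dist_eq, sub_zero, abs_le]
    constructor <;> linarith [hI.1, hI.2, hs n]
  simpa using card_le_coverNumber (Finset.range (2 ^ m)) (cantorLeft s (n + m)) hmem
    fun i hi j hj hij => by
      simp only [Finset.mem_range] at hi hj
      rcases Nat.lt_or_gt_of_ne hij with h | h
      · exact hsep i j h (by omega)
      · rw [dist_comm]; exact hsep j i h (by omega)

end CentralCantor

section DyadicSteps

def dyadicSteps (f : ℕ → ℕ) (n : ℕ) : ℝ := 2 ^ (-(f n : ℝ))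

variable {f : ℕ → ℕ}

lemma dyadicSteps_pos (n : ℕ) : 0 < dyadicSteps f n := Real.rpow_pos_of_pos two_pos _

lemma dyadicSteps_le_dyadicSteps_iff {a b : ℕ} :
    dyadicSteps f a ≤ dyadicSteps f b ↔ f b ≤ f a := by
  rw [dyadicSteps, dyadicSteps, Real.rpow_le_rpow_left_iff one_lt_two, neg_le_neg_iff, Nat.cast_le]

lemma dyadicSteps_div (a b : ℕ) :
    dyadicSteps f a / dyadicSteps f b = 2 ^ ((f b : ℝ) - f a) := by
  rw [dyadicSteps, dyadicSteps, ← Real.rpow_sub two_pos]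
  ring_nf

lemma dyadicSteps_rpow (n : ℕ) (x : ℝ) : dyadicSteps f n ^ x = 2 ^ (-(f n : ℝ) * x) := by
  rw [dyadicSteps, ← Real.rpow_mul zero_le_two]

variable (hf : ∀ n, f n + 2 ≤ f (n + 1) ∧ f (n + 1) ≤ f n + 3)
include hf

lemma add_two_mul_le_apply_add (n d : ℕ) : f n + 2 * d ≤ f (n + d) := by
  induction d with
  | zero => simp
  | succ d ih => rw [← add_assoc]; linarith [(hf (n + d)).1]

lemma apply_add_le_add_three_mul (n d : ℕ) : f (n + d) ≤ f n + 3 * d := by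
  induction d with
  | zero => simp
  | succ d ih => rw [← add_assoc]; linarith [(hf (n + d)).2]

lemma monotone_of_steps : Monotone f :=
  monotone_nat_of_le_succ fun n => by linarith [(hf n).1]

lemma four_mul_dyadicSteps_succ_le (n : ℕ) : 4 * dyadicSteps f (n + 1) ≤ dyadicSteps f n := by
  rw [← le_div_iff₀ (dyadicSteps_pos _), dyadicSteps_div]
  have : (f n : ℝ) + 2 ≤ f (n + 1) := by exact_mod_cast (hf n).1
  calc (4:ℝ) = 2 ^ (2:ℝ) := by norm_num
    _ ≤ _ := Real.rpow_le_rpow_of_exponent_le one_le_two (by linarith)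

lemma isCentralCantorSet_dyadicSteps (hf0 : f 0 = 0) :
    IsCentralCantorSet (dyadicSteps f) (centralCantor (dyadicSteps f)) :=
  isCentralCantorSet_centralCantor dyadicSteps_pos (four_mul_dyadicSteps_succ_le hf)
    (by simp [dyadicSteps, hf0])

lemma tendsto_dyadicSteps : Tendsto (dyadicSteps f) atTop (𝓝 0) :=
  tendsto_atTop_zero_of_four_mul_le dyadicSteps_pos (four_mul_dyadicSteps_succ_le hf)

lemma exists_levels (hf0 : f 0 = 0) {r R : ℝ} (hr : 0 < r) (hrR : r ≤ R) (hR : R ≤ 1) :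
    ∃ n p, n ≤ p ∧ R ∈ Ioc (dyadicSteps f (n + 1)) (dyadicSteps f n) ∧
      r ∈ Ioc (dyadicSteps f (p + 1)) (dyadicSteps f p) := by
  have hs0 : dyadicSteps f 0 = 1 := by simp [dyadicSteps, hf0]
  obtain ⟨n, hn⟩ := exists_mem_Ioc_of_tendsto_zero (tendsto_dyadicSteps hf) (hr.trans_le hrR)
    (hs0 ▸ hR)
  obtain ⟨p, hp⟩ := exists_mem_Ioc_of_tendsto_zero (tendsto_dyadicSteps hf) hr
    (hs0 ▸ hrR.trans hR)
  refine ⟨n, p, ?_, hn, hp⟩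
  by_contra! hpn
  linarith [dyadicSteps_le_dyadicSteps_iff.2 (monotone_of_steps hf (by omega : p + 1 ≤ n)), hp.1,
    hn.2]

lemma eventually_exists_level_ge (N : ℕ) :
    ∀ᶠ R in 𝓝[>] 0, ∃ n, N ≤ n ∧ R ∈ Ioc (dyadicSteps f (n + 1)) (dyadicSteps f n) := by
  filter_upwards [Ioo_mem_nhdsGT (dyadicSteps_pos N)] with R hR
  obtain ⟨n, hn⟩ := exists_mem_Ioc_of_tendsto_zero (tendsto_dyadicSteps hf) hR.1
    (hR.2.le.trans (dyadicSteps_le_dyadicSteps_iff.2 (monotone_of_steps hf N.zero_le)))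
  refine ⟨n, ?_, hn⟩
  by_contra! hnN
  linarith [dyadicSteps_le_dyadicSteps_iff.2 (monotone_of_steps hf (by omega : n + 1 ≤ N)), hn.1,
    hR.2]

/-- `3 * 2 ^ (p + 1 - n)` balls suffice, and `R / r` is at least
`dyadicSteps f (n + 1) / dyadicSteps f p = 2 ^ (f p - f (n + 1))`. -/
lemma coverNumber_le_of_exponent_le (z : ℝ) {r R α : ℝ} {n p K : ℕ} (hα : 0 ≤ α) (hnp : n ≤ p)
    (hR : R ∈ Ioc (dyadicSteps f (n + 1)) (dyadicSteps f n))
    (hr : r ∈ Ioc (dyadicSteps f (p + 1)) (dyadicSteps f p))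
    (hexp : (p : ℝ) - n + 3 ≤ K + α * ((f p : ℝ) - f (n + 1))) :
    coverNumber r (closedBall z R ∩ centralCantor (dyadicSteps f)) ≤
      ENNReal.ofReal (2 ^ K * (R / r) ^ α) := by
  have hcov := coverNumber_closedBall_inter_le dyadicSteps_pos (four_mul_dyadicSteps_succ_le hf)
    z (r := r) (m := p + 1 - n) hR.2 (by rw [Nat.add_sub_cancel' (by omega)]; exact hr.1.le)
  have hratio : (2:ℝ) ^ ((f p : ℝ) - f (n + 1)) ≤ R / r := by
    rw [← dyadicSteps_div]
    exact div_le_div₀ ((dyadicSteps_pos _).trans hR.1).le hR.1.le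
      ((dyadicSteps_pos _).trans hr.1) hr.2
  have hreal : 3 * (2:ℝ) ^ (p + 1 - n) ≤ 2 ^ K * (R / r) ^ α := calc
    3 * (2:ℝ) ^ (p + 1 - n) ≤ 2 ^ ((p : ℝ) - n + 3) := by
      rw [show (p : ℝ) - n + 3 = ((p + 1 - n : ℕ) : ℝ) + 2 by
          push_cast [Nat.cast_sub (by omega : n ≤ p + 1)]; ring_nf,
        Real.rpow_add two_pos, Real.rpow_natCast, Real.rpow_two]
      nlinarith [pow_pos (two_pos : (0:ℝ) < 2) (p + 1 - n)]
    _ ≤ 2 ^ ((K : ℝ) + α * ((f p : ℝ) - f (n + 1))) :=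
      Real.rpow_le_rpow_of_exponent_le one_le_two hexp
    _ = 2 ^ K * (2 ^ ((f p : ℝ) - f (n + 1))) ^ α := by
      rw [Real.rpow_add two_pos, Real.rpow_natCast, ← Real.rpow_mul zero_le_two, mul_comm α]
    _ ≤ 2 ^ K * (R / r) ^ α := by gcongr
  refine hcov.trans (le_of_eq_of_le ?_ (ENNReal.ofReal_le_ofReal hreal))
  rw [ENNReal.ofReal_mul (by norm_num), ENNReal.ofReal_pow (by norm_num)]
  norm_num

lemma one_mem_upperPhiDimSet_zero (hf0 : f 0 = 0) :
    (1:ℝ) ∈ upperPhiDimSet (fun _ => 0) (centralCantor (dyadicSteps f)) := by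
  refine ⟨1, one_pos, 2 ^ 6, by positivity, fun r R hr hrR _ hR1 z _ => ?_⟩
  rw [add_zero, Real.rpow_one] at hrR
  obtain ⟨n, p, hnp, hR, hr'⟩ := exists_levels hf hf0 hr hrR hR1.le
  refine coverNumber_le_of_exponent_le hf z zero_le_one hnp hR hr' ?_
  have h₁ := add_two_mul_le_apply_add hf n (p - n)
  rw [Nat.add_sub_cancel' hnp] at h₁
  have h₁' : (f n : ℝ) + 2 * ((p - n : ℕ) : ℝ) ≤ f p := by exact_mod_cast h₁
  have h₂ : (f (n + 1) : ℝ) ≤ f n + 3 := by exact_mod_cast (hf n).2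
  have h₃ : (n : ℝ) ≤ p := by exact_mod_cast hnp
  rw [Nat.cast_sub hnp] at h₁'
  push_cast
  linarith

variable {φ : ℕ → ℕ} {Φ : ℝ → ℝ}
  (hΦ : ∀ n, ∀ R ∈ Ioc (dyadicSteps f (n + 1)) (dyadicSteps f n),
    R ^ (1 + Φ R) = dyadicSteps f (n + φ n))
include hΦ

lemma eventually_nonneg_of_rpow_eq (htop : Tendsto φ atTop atTop) : ∀ᶠ R in 𝓝[>] 0, 0 ≤ Φ R := by
  obtain ⟨N, hN⟩ := eventually_atTop.1 (htop.eventually_ge_atTop 1)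
  filter_upwards [eventually_exists_level_ge hf N, Ioo_mem_nhdsGT one_pos] with R ⟨n, hNn, hR⟩ hR1
  have : R ^ (1 + Φ R) ≤ R ^ (1:ℝ) := by
    rw [hΦ n R hR, Real.rpow_one]
    exact (dyadicSteps_le_dyadicSteps_iff.2
      (monotone_of_steps hf (by linarith [hN n hNn] : n + 1 ≤ n + φ n))).trans hR.1.le
  linarith [(Real.rpow_le_rpow_left_iff_of_base_lt_one hR1.1 hR1.2).1 this]

/-- `φ n = o(n)` while `f n ≥ 2 n`, so `dyadicSteps f (n + φ n) ≥ dyadicSteps f n ^ (1 + δ)` for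
large `n`. -/
lemma eventually_le_of_rpow_eq (hsmall : Tendsto (fun n : ℕ => (φ n : ℝ) / n) atTop (𝓝 0))
    {δ : ℝ} (hδ : 0 < δ) : ∀ᶠ R in 𝓝[>] 0, Φ R ≤ δ := by
  obtain ⟨N, hN⟩ := eventually_atTop.1
    (hsmall.eventually (ge_mem_nhds (by positivity : (0:ℝ) < 2 * δ / 3)))
  filter_upwards [eventually_exists_level_ge hf (max N 1), Ioo_mem_nhdsGT one_pos]
    with R ⟨n, hNn, hR⟩ hR1
  have hn : (0:ℝ) < n := by exact_mod_cast (le_max_right N 1).trans hNn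
  have hφ : 3 * (φ n : ℝ) ≤ 2 * δ * n := by
    have := hN n ((le_max_left N 1).trans hNn)
    rw [div_le_iff₀ hn] at this
    linarith
  have hfn : 2 * (n : ℝ) ≤ f n := by
    exact_mod_cast (Nat.le_add_left _ _).trans (zero_add n ▸ add_two_mul_le_apply_add hf 0 n)
  have hfφ : (f (n + φ n) : ℝ) ≤ f n + 3 * φ n := by
    exact_mod_cast apply_add_le_add_three_mul hf n (φ n)
  have : R ^ (1 + δ) ≤ R ^ (1 + Φ R) := by
    rw [hΦ n R hR]
    calc R ^ (1 + δ) ≤ dyadicSteps f n ^ (1 + δ) := Real.rpow_le_rpow hR1.1.le hR.2 (by positivity)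
      _ ≤ dyadicSteps f (n + φ n) := by
        rw [dyadicSteps_rpow, dyadicSteps, Real.rpow_le_rpow_left_iff one_lt_two]
        nlinarith
  linarith [(Real.rpow_le_rpow_left_iff_of_base_lt_one hR1.1 hR1.2).1 this]

lemma tendsto_nhdsGT_zero_of_rpow_eq (htop : Tendsto φ atTop atTop)
    (hsmall : Tendsto (fun n : ℕ => (φ n : ℝ) / n) atTop (𝓝 0)) : Tendsto Φ (𝓝[>] 0) (𝓝 0) :=
  tendsto_order.2
    ⟨fun _ ha => (eventually_nonneg_of_rpow_eq hf hΦ htop).mono fun _ h => ha.trans_le h,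
    fun _ hb => (eventually_le_of_rpow_eq hf hΦ hsmall (half_pos hb)).mono
      fun _ h => h.trans_lt (half_lt_self hb)⟩

/-- Compare exponents in `r ≤ R ^ (1 + t Φ R) ≤ dyadicSteps f n ^ (1 - t) * R ^ (t (1 + Φ R))`,
using `R ^ (1 + Φ R) = dyadicSteps f (n + φ n)` and `f (n + φ n) ≥ f n + 2 φ n`. -/
lemma two_mul_mul_lt_three_mul_of_le_rpow {t r R : ℝ} {n p : ℕ} (ht₀ : 0 ≤ t) (ht₁ : t ≤ 1)
    (hnp : n ≤ p) (hR : R ∈ Ioc (dyadicSteps f (n + 1)) (dyadicSteps f n))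
    (hr : r ∈ Ioc (dyadicSteps f (p + 1)) (dyadicSteps f p)) (hrR : r ≤ R ^ (1 + t * Φ R)) :
    2 * t * φ n < 3 * ((p + 1 - n : ℕ) : ℝ) := by
  have hR₀ : 0 < R := (dyadicSteps_pos _).trans hR.1
  have hdepth : (1 - t) * f n + t * f (n + φ n) < f (p + 1) := by
    have : dyadicSteps f (p + 1) < dyadicSteps f n ^ (1 - t) * dyadicSteps f (n + φ n) ^ t :=
      calc dyadicSteps f (p + 1) < R ^ (1 + t * Φ R) := hr.1.trans_le hrR
        _ = R ^ (1 - t) * (R ^ (1 + Φ R)) ^ t := by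
          rw [← Real.rpow_mul hR₀.le, ← Real.rpow_add hR₀]
          ring_nf
        _ ≤ _ := by
          rw [hΦ n R hR]
          exact mul_le_mul_of_nonneg_right (Real.rpow_le_rpow hR₀.le hR.2 (by linarith))
            (Real.rpow_nonneg (dyadicSteps_pos _).le _)
    rw [dyadicSteps_rpow, dyadicSteps_rpow, ← Real.rpow_add two_pos, dyadicSteps,
      Real.rpow_lt_rpow_left_iff one_lt_two] at this
    linarith
  have hφ : (f n : ℝ) + 2 * φ n ≤ f (n + φ n) := by
    exact_mod_cast add_two_mul_le_apply_add hf n (φ n)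
  have hp : (f (p + 1) : ℝ) ≤ f n + 3 * ((p + 1 - n : ℕ) : ℝ) := by
    exact_mod_cast (Nat.add_sub_cancel' (by omega : n ≤ p + 1)) ▸
      apply_add_le_add_three_mul hf n (p + 1 - n)
  nlinarith [mul_le_mul_of_nonneg_left hφ ht₀]

end DyadicSteps

section Runs

variable (φ : ℕ → ℕ)

def threshold (M : ℕ) : ℕ := sInf {n | M ≤ φ n}

/-- The `k`-th run of steps with ratio `1/4` is `[runStart φ k, runStart φ k + k)`. The factor
`8` makes all earlier runs negligible at the start of a run, and the second term makes
`k ^ 2 ≤ φ n` as soon as `2 n > runStart φ k`. -/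
def runStart : ℕ → ℕ
  | 0 => 0
  | k + 1 => 8 * (runStart k + k + 1) + 2 * threshold φ ((k + 1) ^ 2)

/-- The bound `k ≤ j` is automatic (`k ≤ runStart φ k`) and makes the predicate decidable. -/
def IsRunIndex (j : ℕ) : Prop := ∃ k ≤ j, runStart φ k ≤ j ∧ j < runStart φ k + k

instance : DecidablePred (IsRunIndex φ) := fun _ => by unfold IsRunIndex; infer_instance

def runCount (a b : ℕ) : ℕ := ((Finset.Ico a b).filter (IsRunIndex φ)).card

def runExponent (n : ℕ) : ℕ := ∑ j ∈ Finset.range n, if IsRunIndex φ j then 2 else 3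

lemma runExponent_zero : runExponent φ 0 = 0 := rfl

lemma runExponent_steps (n : ℕ) :
    runExponent φ n + 2 ≤ runExponent φ (n + 1) ∧ runExponent φ (n + 1) ≤ runExponent φ n + 3 := by
  rw [runExponent, runExponent, Finset.sum_range_succ]
  split_ifs <;> omega

lemma runExponent_add_add_runCount (a d : ℕ) :
    runExponent φ (a + d) + runCount φ a (a + d) = runExponent φ a + 3 * d := by
  rw [runExponent, runExponent, ← Finset.sum_range_add_sum_Ico _ (Nat.le_add_right a d), runCount,
    Finset.card_filter, add_assoc, ← Finset.sum_add_distrib,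
    Finset.sum_congr rfl fun j _ => show ((if IsRunIndex φ j then 2 else 3) +
      if IsRunIndex φ j then 1 else 0) = 3 by split_ifs <;> rfl]
  simp [mul_comm]

variable {φ}

lemma eight_mul_add_le_runStart_succ (k : ℕ) : 8 * (runStart φ k + k + 1) ≤ runStart φ (k + 1) := by
  rw [runStart]; omega

lemma strictMono_runStart : StrictMono (runStart φ) :=
  strictMono_nat_of_lt_succ fun k => by linarith [eight_mul_add_le_runStart_succ (φ := φ) k]

lemma eight_mul_le_runStart (k : ℕ) : 8 * k ≤ runStart φ k := by
  cases k with
  | zero => simp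
  | succ k => linarith [eight_mul_add_le_runStart_succ (φ := φ) k]

lemma isRunIndex_of_mem {k j : ℕ} (h₁ : runStart φ k ≤ j) (h₂ : j < runStart φ k + k) :
    IsRunIndex φ j :=
  ⟨k, by linarith [eight_mul_le_runStart (φ := φ) k], h₁, h₂⟩

lemma IsRunIndex.cases {j K : ℕ} (h : IsRunIndex φ j) (hj : j < runStart φ (K + 1)) :
    8 * j < runStart φ K ∨ runStart φ K ≤ j ∧ j < runStart φ K + K := by
  obtain ⟨k, -, h₁, h₂⟩ := h
  rcases lt_trichotomy k K with hk | rfl | hk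
  · have := eight_mul_add_le_runStart_succ (φ := φ) k
    have := (strictMono_runStart (φ := φ)).monotone (show k + 1 ≤ K from hk)
    omega
  · exact Or.inr ⟨h₁, h₂⟩
  · have := (strictMono_runStart (φ := φ)).monotone (show K + 1 ≤ k from hk)
    omega

lemma exists_runStart_lt_le {N : ℕ} (hN : 0 < N) :
    ∃ K, runStart φ K < N ∧ N ≤ runStart φ (K + 1) := by
  classical
  have hex : ∃ K, N ≤ runStart φ (K + 1) := ⟨N, by linarith [eight_mul_le_runStart (φ := φ) (N + 1)]⟩
  refine ⟨Nat.find hex, ?_, Nat.find_spec hex⟩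
  rcases Nat.eq_zero_or_pos (Nat.find hex) with h | h
  · rw [h]; exact hN
  · obtain ⟨K, hK⟩ := Nat.exists_eq_add_one.2 h
    rw [hK]
    exact not_le.1 (Nat.find_min hex (by omega))

lemma sq_le_of_runStart_lt_two_mul (hmono : Monotone φ) (htop : Tendsto φ atTop atTop) {K n : ℕ}
    (h : runStart φ K < 2 * n) : K ^ 2 ≤ φ n := by
  cases K with
  | zero => simp
  | succ k =>
    have hmem : threshold φ ((k + 1) ^ 2) ∈ {n | (k + 1) ^ 2 ≤ φ n} :=
      Nat.sInf_mem (htop.eventually_ge_atTop _).exists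
    refine hmem.trans (hmono ?_)
    have : 2 * threshold φ ((k + 1) ^ 2) ≤ runStart φ (k + 1) := by rw [runStart]; omega
    omega

lemma runExponent_runStart_add (k : ℕ) :
    runExponent φ (runStart φ k + k) = runExponent φ (runStart φ k) + 2 * k := by
  have hcount : runCount φ (runStart φ k) (runStart φ k + k) = k := by
    rw [runCount, Finset.filter_true_of_mem fun j hj =>
      isRunIndex_of_mem (Finset.mem_Ico.1 hj).1 (Finset.mem_Ico.1 hj).2]
    simp
  have := runExponent_add_add_runCount φ (runStart φ k) k
  omega

lemma runCount_le {n m K : ℕ} (hK : n + m ≤ runStart φ (K + 1)) :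
    runCount φ n (n + m) ≤ (runStart φ K + 7) / 8 + K := by
  have hsub : (Finset.Ico n (n + m)).filter (IsRunIndex φ) ⊆
      Finset.range ((runStart φ K + 7) / 8) ∪ Finset.Ico (runStart φ K) (runStart φ K + K) := by
    intro j hj
    rw [Finset.mem_filter, Finset.mem_Ico] at hj
    rcases hj.2.cases (by omega : j < runStart φ (K + 1)) with h | h
    · exact Finset.mem_union_left _ (Finset.mem_range.2 (by omega))
    · exact Finset.mem_union_right _ (Finset.mem_Ico.2 h)
  simpa [runCount] using (Finset.card_le_card hsub).trans (Finset.card_union_le _ _)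

lemma runCount_le_of_runStart_lt {n m K : ℕ} (hK : n + m ≤ runStart φ (K + 1))
    (hn : runStart φ K < 2 * n) : runCount φ n (n + m) ≤ K := by
  have hsub : (Finset.Ico n (n + m)).filter (IsRunIndex φ) ⊆
      Finset.Ico (runStart φ K) (runStart φ K + K) := by
    intro j hj
    rw [Finset.mem_filter, Finset.mem_Ico] at hj
    exact Finset.mem_Ico.2 ((hj.2.cases (by omega)).resolve_left (by omega))
  simpa [runCount] using Finset.card_le_card hsub

/-- Let `K` be the last run starting before `n + m`. If `runStart φ K < 2 m`, the runs met by the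
window have total length at most about `runStart φ K / 4`; otherwise the window only meets run
`K`, and `K ^ 2 ≤ φ n ≤ m / t` makes `K` small compared with `m`. -/
lemma two_mul_runCount_le (hmono : Monotone φ) (htop : Tendsto φ atTop atTop) {t : ℝ}
    (ht : 0 < t) : ∃ C, ∀ n m : ℕ, t * φ n ≤ m → 2 * runCount φ n (n + m) ≤ m + C := by
  refine ⟨⌈4 / t⌉₊ + 2, fun n m hm => ?_⟩
  rcases Nat.eq_zero_or_pos m with rfl | hm0
  · simp [runCount]
  obtain ⟨K, hK₁, hK₂⟩ := exists_runStart_lt_le (φ := φ) (N := n + m) (by omega)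
  have h8 := eight_mul_le_runStart (φ := φ) K
  rcases lt_or_ge (runStart φ K) (2 * m) with hlt | hge
  · have := runCount_le hK₂
    omega
  have hcount := runCount_le_of_runStart_lt hK₂ (by omega)
  have hK : (K : ℝ) ^ 2 ≤ φ n := by
    exact_mod_cast sq_le_of_runStart_lt_two_mul hmono htop (by omega : runStart φ K < 2 * n)
  have hK' : 2 * (K : ℝ) ≤ m + ⌈4 / t⌉₊ := by
    rcases le_or_gt (K : ℝ) (2 / t) with hKt | hKt
    · have : 2 * (K : ℝ) ≤ 4 / t := by rw [show 4 / t = 2 * (2 / t) by ring]; linarith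
      linarith [Nat.le_ceil (4 / t), (Nat.cast_nonneg m : (0:ℝ) ≤ m)]
    · have : 2 < t * K := by rwa [div_lt_iff₀ ht, mul_comm] at hKt
      nlinarith [(Nat.cast_nonneg ⌈4 / t⌉₊ : (0:ℝ) ≤ _)]
  have : 2 * K ≤ m + ⌈4 / t⌉₊ := by exact_mod_cast hK'
  omega

lemma half_le_of_mem_upperPhiDimSet_zero {α : ℝ}
    (hα : α ∈ upperPhiDimSet (fun _ => 0) (centralCantor (dyadicSteps (runExponent φ)))) :
    1 / 2 ≤ α := by
  set s := dyadicSteps (runExponent φ)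
  have hf := runExponent_steps φ
  have hs4 := four_mul_dyadicSteps_succ_le hf
  obtain ⟨c₁, hc₁, c₂, hc₂, hα⟩ := hα
  by_contra! hα2
  have hpow : Tendsto (fun k : ℕ => (2 ^ (1 - 2 * α) : ℝ) ^ k) atTop atTop :=
    tendsto_pow_atTop_atTop_of_one_lt (Real.one_lt_rpow one_lt_two (by linarith))
  have hR : Tendsto (fun k => s (runStart φ k)) atTop (𝓝 0) :=
    (tendsto_dyadicSteps hf).comp strictMono_runStart.tendsto_atTop
  obtain ⟨k, hkR, hkc⟩ :=
    ((hR.eventually (gt_mem_nhds hc₁)).and (hpow.eventually_gt_atTop c₂)).exists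
  have hX0 : 0 < (s (runStart φ k) / s (runStart φ k + k)) ^ α :=
    Real.rpow_pos_of_pos (div_pos (dyadicSteps_pos _) (dyadicSteps_pos _)) _
  have hX : (2 ^ (1 - 2 * α) : ℝ) ^ k * (s (runStart φ k) / s (runStart φ k + k)) ^ α = 2 ^ k := by
    rw [dyadicSteps_div, runExponent_runStart_add, ← Real.rpow_mul zero_le_two,
      ← Real.rpow_natCast, ← Real.rpow_mul zero_le_two, ← Real.rpow_add two_pos,
      ← Real.rpow_natCast]
    push_cast
    ring_nf
  have hcov := (two_pow_le_coverNumber dyadicSteps_pos hs4 (runStart φ k) k).trans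
    (hα _ _ (dyadicSteps_pos _)
      (by simpa using
        dyadicSteps_le_dyadicSteps_iff.2 (monotone_of_steps hf (Nat.le_add_right _ k)))
      (by simp) hkR 0 (zero_mem_centralCantor dyadicSteps_pos hs4))
  rw [← ENNReal.ofReal_ofNat, ← ENNReal.ofReal_pow zero_le_two,
    ENNReal.ofReal_le_ofReal_iff (mul_pos hc₂ hX0).le] at hcov
  nlinarith

lemma half_le_assouadDim : 1 / 2 ≤ assouadDim (centralCantor (dyadicSteps (runExponent φ))) :=
  le_csInf ⟨1, one_mem_upperPhiDimSet_zero (runExponent_steps φ) (runExponent_zero φ)⟩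
    fun _ hα => half_le_of_mem_upperPhiDimSet_zero hα

/-- The `m` steps between the scales `R` and `r` number at least `2 t φ n / 3`, so at most about
`m / 2` of them lie in runs: then `R / r ≳ 2 ^ (5 m / 2)` while `≲ 2 ^ m` balls suffice. -/
lemma two_fifths_mem_upperPhiDimSet (hmono : Monotone φ) (htop : Tendsto φ atTop atTop)
    {Φ : ℝ → ℝ} (hΦ : ∀ n, ∀ R ∈ Ioc (dyadicSteps (runExponent φ) (n + 1))
      (dyadicSteps (runExponent φ) n), R ^ (1 + Φ R) = dyadicSteps (runExponent φ) (n + φ n))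
    {t : ℝ} (ht₀ : 0 < t) (ht₁ : t ≤ 1) :
    (2 / 5 : ℝ) ∈
      upperPhiDimSet (fun x => t * Φ x) (centralCantor (dyadicSteps (runExponent φ))) := by
  set f := runExponent φ
  have hf := runExponent_steps φ
  obtain ⟨C, hC⟩ := two_mul_runCount_le hmono htop (by positivity : 0 < 2 * t / 3)
  refine ⟨1, one_pos, 2 ^ (C + 5), by positivity, fun r R hr hrR hRR hR₁ z _ => ?_⟩
  obtain ⟨n, p, hnp, hR, hr'⟩ := exists_levels hf (runExponent_zero φ) hr (hrR.trans hRR) hR₁.le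
  have hwin := hC n (p + 1 - n) (by
    linarith [two_mul_mul_lt_three_mul_of_le_rpow hf hΦ ht₀.le ht₁ hnp hR hr' hrR])
  have hid := runExponent_add_add_runCount φ n (p + 1 - n)
  rw [Nat.add_sub_cancel' (by omega : n ≤ p + 1)] at hwin hid
  refine coverNumber_le_of_exponent_le hf z (by norm_num) hnp hR hr' ?_
  have hwin' : 2 * (runCount φ n (p + 1) : ℝ) ≤ (p + 1 - n : ℕ) + C := by exact_mod_cast hwin
  have hid' : (f (p + 1) : ℝ) + runCount φ n (p + 1) = f n + 3 * ((p + 1 - n : ℕ) : ℝ) := by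
    exact_mod_cast hid
  have h₁ : (f (n + 1) : ℝ) ≤ f n + 3 := by exact_mod_cast (hf n).2
  have h₂ : (f (p + 1) : ℝ) ≤ f p + 3 := by exact_mod_cast (hf p).2
  rw [Nat.cast_sub (by omega : n ≤ p + 1)] at hwin' hid'
  push_cast at hwin' hid' ⊢
  linarith

end Runs

/-- Failure of continuity in the parameter `t` for `Φ_t = t·Φ` at `t = 0`: for any
increasing depth function `φ` with `φ(n) → ∞` and `φ(n)/n → 0` there is a central Cantor
set `E` such that, for the dimension function `Φ` associated with `φ` and `E` (that is,
`R^(1+Φ R) = s (n + φ n)` for `R ∈ (s (n+1), s n]`), the upper `tΦ`-dimensions of `E` lie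
between the quasi-Assouad and Assouad dimensions of `E`, yet their limit as `t → 0⁺` is
strictly smaller than the Assouad dimension of `E`. -/
theorem exists_centralCantor_discontinuity_at_zero (φ : ℕ → ℕ) (hmono : Monotone φ)
    (htop : Tendsto φ atTop atTop)
    (hsmall : Tendsto (fun n : ℕ => (φ n : ℝ) / (n : ℝ)) atTop (nhds 0)) :
    ∃ (s : ℕ → ℝ) (E : Set ℝ), IsCentralCantorSet s E ∧
      ∀ Φ : ℝ → ℝ, (∀ n : ℕ, ∀ R ∈ Ioc (s (n + 1)) (s n), R ^ (1 + Φ R) = s (n + φ n)) →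
        (∀ t : ℝ, 0 < t →
          upperPhiDim (fun x => t * Φ x) E ∈ Icc (quasiAssouadDim E) (assouadDim E)) ∧
        ∃ ℓ : ℝ, Tendsto (fun t : ℝ => upperPhiDim (fun x => t * Φ x) E)
            (nhdsWithin 0 (Ioi 0)) (nhds ℓ) ∧ ℓ < assouadDim E := by
  have hf := runExponent_steps φ
  refine ⟨_, _, isCentralCantorSet_dyadicSteps hf (runExponent_zero φ), fun Φ hΦ => ?_⟩
  have hE : (centralCantor (dyadicSteps (runExponent φ))).Nonempty :=
    ⟨0, zero_mem_centralCantor dyadicSteps_pos (four_mul_dyadicSteps_succ_le hf)⟩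
  have hA := one_mem_upperPhiDimSet_zero hf (runExponent_zero φ)
  have hΦ₀ := eventually_nonneg_of_rpow_eq hf hΦ htop
  refine ⟨fun t ht => upperPhiDim_mul_mem_Icc hE ⟨1, hA⟩ hΦ₀
    (tendsto_nhdsGT_zero_of_rpow_eq hf hΦ htop hsmall) ht, ?_⟩
  obtain ⟨ℓ, hℓ, hlim⟩ := ((antitoneOn_upperPhiDim_mul hE ⟨1, hA⟩ hΦ₀).mono
    Ioo_subset_Ioi_self).exists_le_tendsto_nhdsGT one_pos fun t ht =>
      upperPhiDim_le_of_mem hE (hΦ₀.mono fun _ h => mul_nonneg ht.1.le h)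
        (two_fifths_mem_upperPhiDimSet hmono htop hΦ ht.1 ht.2.le)
  exact ⟨ℓ, hlim, hℓ.trans_lt ((by norm_num : (2 / 5 : ℝ) < 1 / 2).trans_le half_le_assouadDim)⟩

end
end

section
/- Given any 0 < α < β < 1, there is a set E ⊆ [0,1] such that {dim̄_Φ E : Φ is a dimension function with Φ(x) → 0 as x → 0} = [α, β], and moreover dim_qA E = α and dim_A E = β. -/
/-!
The set is a Cantor set built level by level: at every level each piece splits in two, and the
pieces shrink by the factor `e^{-log 2 / β}` on the levels of the blocks `[n_k, n_k + k]`
(`n_{k+1} = 2 ^ n_k`) and by `e^{-log 2 / α}` on all other levels. A window of levels `[n, m)`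
with `F` free and `B` block levels therefore has dimension `(F + B) / (F / α + B / β)`.

Every window has dimension between `α` and `β`, so all upper `Φ`-dimensions lie in `[α, β]`,
and the windows `[n_k, n_k + k]` give `dim_A E = β`. A constant `Φ` sees at level `n` only
windows of length `≳ n`, which dwarf the blocks they meet (the block starting at `n_k` has
length `k + 1 ≤ n_k^{1/4}`), so `dim_qA E = α`. Finally, for `x ∈ [α, β)` take the dimension
function whose window at the start of block `k` is that block followed by about `ρ (k + 1)`
free levels, with `ρ` chosen so that this window has dimension `x`: it is `O(k^2 / n_k) → 0`,
and its upper `Φ`-dimension is exactly `x`.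
-/

open Set Metric Filter Topology
open scoped ENNReal

noncomputable section

namespace PhiDimension

open Real
open scoped Classical

section Covering

variable {X ι : Type*} [PseudoMetricSpace X] [Fintype ι]

lemma coverNumber_le_card {r : ℝ} {S : Set X} (f : ι → X)
    (h : S ⊆ ⋃ i, closedBall (f i) r) : coverNumber r S ≤ Fintype.card ι := by
  refine (iInf₂_le (Finset.univ.image f) fun x hx => ?_).trans
    (Nat.cast_le.mpr Finset.card_image_le)
  obtain ⟨i, hi⟩ := mem_iUnion.mp (h hx)
  exact mem_iUnion₂.mpr ⟨f i, Finset.mem_image_of_mem f (Finset.mem_univ i), hi⟩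

lemma card_le_coverNumber {r : ℝ} {S : Set X} (f : ι → X) (hf : ∀ i, f i ∈ S)
    (hsep : Pairwise fun i j => 2 * r < dist (f i) (f j)) :
    (Fintype.card ι : ℝ≥0∞) ≤ coverNumber r S := by
  refine le_iInf₂ fun u hu => Nat.cast_le.mpr ?_
  have hcentre : ∀ i, ∃ y ∈ u, f i ∈ closedBall y r := fun i => by simpa using hu (hf i)
  choose g hgu hfg using hcentre
  refine Finset.card_le_card_of_injOn g (fun i _ => hgu i) fun i _ j _ hij => ?_
  by_contra hne
  have hi := mem_closedBall.mp (hfg i)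
  have hj := mem_closedBall.mp (hfg j)
  rw [hij] at hi
  linarith [hsep hne, dist_triangle_right (f i) (f j) (g j)]

end Covering

section Cantor

def cantorPoint (s : ℕ → ℝ) (ε : ℕ → Bool) : ℝ :=
  ∑' i, if ε i then s i - s (i + 1) else 0

def cantorSet (s : ℕ → ℝ) : Set ℝ := range (cantorPoint s)

section Antitone

variable {s : ℕ → ℝ} (hs : Antitone s) (hs0 : Tendsto s atTop (𝓝 0))
include hs

lemma cantorTerm_nonneg (ε : ℕ → Bool) (i : ℕ) :
    0 ≤ if ε i then s i - s (i + 1) else 0 := by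
  split_ifs
  exacts [sub_nonneg.mpr (hs i.le_succ), le_rfl]

lemma cantorTerm_le (ε : ℕ → Bool) (i : ℕ) :
    (if ε i then s i - s (i + 1) else 0) ≤ s i - s (i + 1) := by
  split_ifs
  exacts [le_rfl, sub_nonneg.mpr (hs i.le_succ)]

include hs0

lemma hasSum_sub_succ : HasSum (fun i => s i - s (i + 1)) (s 0) := by
  rw [hasSum_iff_tendsto_nat_of_nonneg fun i => sub_nonneg.mpr (hs i.le_succ)]
  simp_rw [Finset.sum_range_sub']
  simpa using tendsto_const_nhds.sub hs0

lemma summable_cantorTerm (ε : ℕ → Bool) :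
    Summable fun i => if ε i then s i - s (i + 1) else 0 :=
  (hasSum_sub_succ hs hs0).summable.of_nonneg_of_le (cantorTerm_nonneg hs ε)
    (cantorTerm_le hs ε)

lemma cantorPoint_mem_Icc (ε : ℕ → Bool) : cantorPoint s ε ∈ Icc 0 (s 0) :=
  ⟨tsum_nonneg (cantorTerm_nonneg hs ε),
    ((summable_cantorTerm hs hs0 ε).tsum_le_tsum (cantorTerm_le hs ε)
      (hasSum_sub_succ hs hs0).summable).trans_eq (hasSum_sub_succ hs hs0).tsum_eq⟩

lemma cantorPoint_eq_sum_add_shift (ε : ℕ → Bool) (N : ℕ) :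
    cantorPoint s ε = ∑ i ∈ Finset.range N, (if ε i then s i - s (i + 1) else 0) +
      cantorPoint (fun i => s (i + N)) (fun i => ε (i + N)) := by
  rw [cantorPoint, ← (summable_cantorTerm hs hs0 ε).sum_add_tsum_nat_add N, cantorPoint]
  simp only [Nat.add_right_comm _ 1 N]

lemma cantorPoint_shift_mem_Icc (ε : ℕ → Bool) (N : ℕ) :
    cantorPoint (fun i => s (i + N)) (fun i => ε (i + N)) ∈ Icc 0 (s N) := by
  simpa using cantorPoint_mem_Icc (fun i j hij => hs (Nat.add_le_add_right hij N))
    (hs0.comp (tendsto_add_atTop_nat N)) (fun i => ε (i + N))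

lemma abs_cantorPoint_sub_le {ε ε' : ℕ → Bool} {N : ℕ} (h : ∀ i < N, ε i = ε' i) :
    |cantorPoint s ε - cantorPoint s ε'| ≤ s N := by
  have hpre : ∑ i ∈ Finset.range N, (if ε i then s i - s (i + 1) else 0) =
      ∑ i ∈ Finset.range N, (if ε' i then s i - s (i + 1) else 0) :=
    Finset.sum_congr rfl fun i hi => by rw [h i (Finset.mem_range.mp hi)]
  have h₁ := cantorPoint_shift_mem_Icc hs hs0 ε N
  have h₂ := cantorPoint_shift_mem_Icc hs hs0 ε' N
  rw [cantorPoint_eq_sum_add_shift hs hs0 ε N, cantorPoint_eq_sum_add_shift hs hs0 ε' N, hpre,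
    abs_le]
  constructor <;> linarith [h₁.1, h₁.2, h₂.1, h₂.2]

/-- The digit at the first disagreement contributes a whole gap, the later digits at most
`s (N + 1)` each. -/
lemma sub_sub_le_abs_cantorPoint_sub {ε ε' : ℕ → Bool} {N : ℕ} (h : ∀ i < N, ε i = ε' i)
    (hN : ε N ≠ ε' N) :
    s N - 2 * s (N + 1) ≤ |cantorPoint s ε - cantorPoint s ε'| := by
  have hpre : ∑ i ∈ Finset.range N, (if ε i then s i - s (i + 1) else 0) =
      ∑ i ∈ Finset.range N, (if ε' i then s i - s (i + 1) else 0) :=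
    Finset.sum_congr rfl fun i hi => by rw [h i (Finset.mem_range.mp hi)]
  have hgap : |(if ε N then s N - s (N + 1) else 0) - (if ε' N then s N - s (N + 1) else 0)| =
      s N - s (N + 1) := by
    have := sub_nonneg.mpr (hs N.le_succ)
    cases hε : ε N <;> cases hε' : ε' N <;> simp_all [abs_of_nonneg, abs_sub_comm (s (N + 1))]
  have h₁ := cantorPoint_shift_mem_Icc hs hs0 ε (N + 1)
  have h₂ := cantorPoint_shift_mem_Icc hs hs0 ε' (N + 1)
  have htail := abs_sub_le_of_nonneg_of_le h₂.1 h₂.2 h₁.1 h₁.2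
  rw [cantorPoint_eq_sum_add_shift hs hs0 ε (N + 1),
    cantorPoint_eq_sum_add_shift hs hs0 ε' (N + 1), Finset.sum_range_succ,
    Finset.sum_range_succ, hpre]
  generalize (if ε N then s N - s (N + 1) else 0) = a at hgap ⊢
  generalize (if ε' N then s N - s (N + 1) else 0) = a' at hgap ⊢
  generalize cantorPoint (fun i => s (i + (N + 1))) (fun i => ε (i + (N + 1))) = t at htail ⊢
  generalize cantorPoint (fun i => s (i + (N + 1))) (fun i => ε' (i + (N + 1))) = t' at htail ⊢
  have := abs_sub_abs_le_abs_sub (a - a') (t' - t)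
  calc s N - 2 * s (N + 1) ≤ |a - a'| - |t' - t| := by linarith
    _ ≤ |(a - a') - (t' - t)| := this
    _ = _ := by congr 1; ring

end Antitone

lemma exists_first_ne {ε ε' : ℕ → Bool} {i₀ : ℕ} (h : ε i₀ ≠ ε' i₀) :
    ∃ N ≤ i₀, (∀ i < N, ε i = ε' i) ∧ ε N ≠ ε' N := by
  have hne : ∃ i, ε i ≠ ε' i := ⟨i₀, h⟩
  exact ⟨Nat.find hne, Nat.find_min' hne h, fun i hi => not_not.mp (Nat.find_min hne hi),
    Nat.find_spec hne⟩

def spliceDigits (ε : ℕ → Bool) (n : ℕ) {d : ℕ} (w : Fin d → Bool) : ℕ → Bool :=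
  fun i => if i < n then ε i else if h : i - n < d then w ⟨i - n, h⟩ else false

lemma spliceDigits_of_lt (ε : ℕ → Bool) {n d : ℕ} (w : Fin d → Bool) {i : ℕ} (hi : i < n) :
    spliceDigits ε n w i = ε i :=
  if_pos hi

lemma spliceDigits_add (ε : ℕ → Bool) (n : ℕ) {d : ℕ} (w : Fin d → Bool) (j : Fin d) :
    spliceDigits ε n w (n + j) = w j := by
  simp [spliceDigits]

def level (s : ℕ → ℝ) (R : ℝ) : ℕ := sInf {m | s m < R}

lemma le_of_lt_level {s : ℕ → ℝ} {R : ℝ} {k : ℕ} (hk : k < level s R) : R ≤ s k :=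
  not_lt.mp (Nat.notMem_of_lt_sInf (s := {m | s m < R}) hk)

structure IsCantorScale (s : ℕ → ℝ) (c : ℝ) : Prop where
  pos : ∀ m, 0 < s m
  zero : s 0 = 1
  nonneg : 0 ≤ c
  lt_half : c < 1 / 2
  succ_le : ∀ m, s (m + 1) ≤ c * s m

namespace IsCantorScale

variable {s : ℕ → ℝ} {c : ℝ} (hs : IsCantorScale s c)
include hs

lemma le_mul_pow {n m : ℕ} (h : n ≤ m) : s m ≤ s n * c ^ (m - n) := by
  obtain ⟨d, rfl⟩ := Nat.exists_eq_add_of_le h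
  rw [Nat.add_sub_cancel_left]
  induction d with
  | zero => simp
  | succ d ih =>
    calc s (n + (d + 1)) ≤ c * s (n + d) := hs.succ_le _
      _ ≤ c * (s n * c ^ d) := mul_le_mul_of_nonneg_left (ih (by omega)) hs.nonneg
      _ = s n * c ^ (d + 1) := by ring

lemma strictAnti : StrictAnti s :=
  strictAnti_nat_of_succ_lt fun m =>
    (hs.succ_le m).trans_lt (by nlinarith [hs.pos m, hs.lt_half, hs.nonneg])

lemma tendsto_zero : Tendsto s atTop (𝓝 0) :=
  squeeze_zero (fun m => (hs.pos m).le)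
    (fun m => by simpa [hs.zero] using hs.le_mul_pow (Nat.zero_le m))
    (tendsto_pow_atTop_nhds_zero_of_lt_one hs.nonneg (by linarith [hs.lt_half]))

lemma cantorPoint_mem_Icc (ε : ℕ → Bool) : cantorPoint s ε ∈ Icc 0 1 :=
  hs.zero ▸ PhiDimension.cantorPoint_mem_Icc hs.strictAnti.antitone hs.tendsto_zero ε

lemma mul_le_abs_cantorPoint_sub {ε ε' : ℕ → Bool} {i : ℕ} (h : ε i ≠ ε' i) :
    (1 - 2 * c) * s i ≤ |cantorPoint s ε - cantorPoint s ε'| := by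
  obtain ⟨N, hNi, hagree, hN⟩ := exists_first_ne h
  calc (1 - 2 * c) * s i ≤ (1 - 2 * c) * s N :=
        mul_le_mul_of_nonneg_left (hs.strictAnti.antitone hNi) (by linarith [hs.lt_half])
    _ ≤ s N - 2 * s (N + 1) := by linarith [hs.succ_le N]
    _ ≤ _ := sub_sub_le_abs_cantorPoint_sub hs.strictAnti.antitone hs.tendsto_zero hagree hN

/-- Points of the ball agree with its centre below level `n`, so the `2 ^ (m - n)` choices of
the digits in `[n, m)` give centres of an `s m`-cover. -/
lemma coverNumber_closedBall_le (ε : ℕ → Bool) {R r : ℝ} {n m : ℕ} (hr : s m ≤ r)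
    (hR : R < (1 - 2 * c) * s n) :
    coverNumber r (closedBall (cantorPoint s ε) R ∩ cantorSet s) ≤ 2 ^ (m - n) := by
  refine (coverNumber_le_card
    (fun w : Fin (m - n) → Bool => cantorPoint s (spliceDigits ε n w)) ?_).trans (by simp)
  rintro _ ⟨hy, ε', rfl⟩
  rw [mem_closedBall, Real.dist_eq] at hy
  have hagree : ∀ i < n, ε' i = ε i := fun i hi => by
    by_contra hne
    have := mul_le_mul_of_nonneg_left (hs.strictAnti.antitone hi.le)
      (by linarith [hs.lt_half] : 0 ≤ 1 - 2 * c)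
    linarith [hs.mul_le_abs_cantorPoint_sub hne]
  refine mem_iUnion.mpr ⟨fun j => ε' (n + j), mem_closedBall.mpr ?_⟩
  rw [Real.dist_eq]
  refine (abs_cantorPoint_sub_le hs.strictAnti.antitone hs.tendsto_zero fun i hi => ?_).trans hr
  unfold spliceDigits
  split_ifs with h₁ h₂
  · exact hagree i h₁
  · simp only
    congr
    omega
  · omega

/-- The `2 ^ (m - n)` points with prescribed digits below `n` are `(1 - 2c) s (m - 1)`-separated
and lie in the ball of radius `s n`. -/
lemma two_pow_le_coverNumber_closedBall (ε : ℕ → Bool) {R r : ℝ} {n m : ℕ} (hR : s n ≤ R)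
    (hr : 2 * r < (1 - 2 * c) * s (m - 1)) :
    2 ^ (m - n) ≤ coverNumber r (closedBall (cantorPoint s ε) R ∩ cantorSet s) := by
  have hanti := hs.strictAnti.antitone
  have hcard := card_le_coverNumber (S := closedBall (cantorPoint s ε) R ∩ cantorSet s) (r := r)
    (fun w : Fin (m - n) → Bool => cantorPoint s (spliceDigits ε n w))
    (fun w => ⟨mem_closedBall.mpr ((abs_cantorPoint_sub_le hanti hs.tendsto_zero
      fun i hi => spliceDigits_of_lt ε w hi).trans hR), _, rfl⟩) fun w w' hne => ?_
  · simpa using hcard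
  obtain ⟨j, hj⟩ := Function.ne_iff.mp hne
  have hdiff : spliceDigits ε n w (n + j) ≠ spliceDigits ε n w' (n + j) := by
    rwa [spliceDigits_add, spliceDigits_add]
  have := mul_le_mul_of_nonneg_left (hanti (show n + (j : ℕ) ≤ m - 1 by omega))
    (by linarith [hs.lt_half] : 0 ≤ 1 - 2 * c)
  rw [Real.dist_eq]
  linarith [hs.mul_le_abs_cantorPoint_sub hdiff]

lemma exists_lt {R : ℝ} (hR : 0 < R) : ∃ m, s m < R :=
  (hs.tendsto_zero.eventually_lt_const hR).exists

lemma apply_level_lt {R : ℝ} (hR : 0 < R) : s (level s R) < R :=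
  Nat.sInf_mem (hs.exists_lt hR)

lemma lt_level {R : ℝ} {N : ℕ} (hR : 0 < R) (h : R ≤ s N) : N < level s R :=
  (StrictAnti.lt_iff_gt hs.strictAnti).mp ((hs.apply_level_lt hR).trans_le h)

lemma level_anti {r R : ℝ} (hr : 0 < r) (h : r ≤ R) : level s R ≤ level s r :=
  Nat.sInf_le ((hs.apply_level_lt hr).trans_le h)

lemma level_self (n : ℕ) : level s (s n) = n + 1 :=
  le_antisymm (Nat.sInf_le (hs.strictAnti n.lt_succ_self)) (hs.lt_level (hs.pos n) le_rfl)

lemma tendsto_level : Tendsto (level s) (𝓝[>] 0) atTop :=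
  tendsto_atTop.mpr fun N => by
    filter_upwards [self_mem_nhdsWithin, nhdsWithin_le_nhds (eventually_lt_nhds (hs.pos N))]
      with x hx hxN using (hs.lt_level hx hxN.le).le

end IsCantorScale

end Cantor

section Blocks

def blockStart : ℕ → ℕ
  | 0 => 16
  | k + 1 => 2 ^ blockStart k

def blockEnd (k : ℕ) : ℕ := blockStart k + (k + 1)

def InBlock (i : ℕ) : Prop := ∃ k, blockStart k ≤ i ∧ i < blockEnd k

lemma blockStart_le_blockEnd (k : ℕ) : blockStart k ≤ blockEnd k := Nat.le_add_right _ _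

lemma pow_four_le_two_pow {q : ℕ} (hq : 16 ≤ q) : q ^ 4 ≤ 2 ^ q := by
  induction q, hq using Nat.le_induction with
  | base => norm_num
  | succ q hq ih =>
    calc (q + 1) ^ 4 ≤ 2 * q ^ 4 := by
          have : (16 : ℤ) ≤ q := by exact_mod_cast hq
          zify
          nlinarith [sq_nonneg ((q : ℤ) ^ 2), sq_nonneg (q : ℤ)]
      _ ≤ 2 ^ (q + 1) := by rw [pow_succ 2 q]; omega

lemma add_sixteen_le_blockStart (k : ℕ) : k + 16 ≤ blockStart k := by
  induction k with
  | zero => simp [blockStart]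
  | succ k ih => have := Nat.lt_two_pow_self (n := blockStart k); simp only [blockStart]; omega

lemma le_blockStart (k : ℕ) : k ≤ blockStart k := by
  have := add_sixteen_le_blockStart k
  omega

lemma blockEnd_add_cube_le (k : ℕ) : blockEnd k + (k + 3) ^ 3 ≤ blockStart (k + 1) := by
  have hq : k + 16 ≤ blockStart k := add_sixteen_le_blockStart k
  have hcube : (k + 3) ^ 3 ≤ blockStart k ^ 3 := Nat.pow_le_pow_left (by omega) 3
  have h16 : 16 * blockStart k ^ 3 ≤ blockStart k ^ 4 := by
    rw [pow_succ _ 3, mul_comm]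
    exact Nat.mul_le_mul_left _ (by omega)
  have hq3 : blockStart k ≤ blockStart k ^ 3 := Nat.le_self_pow (by norm_num) _
  have := pow_four_le_two_pow (show 16 ≤ blockStart k by omega)
  simp only [blockEnd, blockStart]
  omega

lemma blockEnd_lt_blockStart_succ (k : ℕ) : blockEnd k < blockStart (k + 1) := by
  have := blockEnd_add_cube_le k
  have : 0 < (k + 3) ^ 3 := by positivity
  omega

lemma blockStart_strictMono : StrictMono blockStart :=
  strictMono_nat_of_lt_succ fun k => by
    have := blockEnd_lt_blockStart_succ k
    simp only [blockEnd] at this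
    omega

lemma blockEnd_strictMono : StrictMono blockEnd := fun i j hij => by
  have := blockStart_strictMono hij
  simp only [blockEnd]
  omega

lemma succ_pow_four_le_blockStart (k : ℕ) : (k + 1) ^ 4 ≤ blockStart k := by
  cases k with
  | zero => simp [blockStart]
  | succ k =>
    have hk := add_sixteen_le_blockStart k
    calc (k + 1 + 1) ^ 4 ≤ blockStart k ^ 4 := Nat.pow_le_pow_left (by omega) 4
      _ ≤ 2 ^ blockStart k := pow_four_le_two_pow (by omega)

lemma not_inBlock_of_blockEnd_le {k i : ℕ} (h₁ : blockEnd k ≤ i) (h₂ : i < blockStart (k + 1)) :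
    ¬ InBlock i := by
  rintro ⟨j, hj₁, hj₂⟩
  rcases le_or_gt j k with h | h
  · have := blockEnd_strictMono.monotone h
    omega
  · have := blockStart_strictMono.monotone (show k + 1 ≤ j by omega)
    omega

def blockIndex (n : ℕ) : ℕ := sInf {k | n ≤ blockEnd k}

lemma le_blockEnd_blockIndex (n : ℕ) : n ≤ blockEnd (blockIndex n) :=
  Nat.sInf_mem (s := {k | n ≤ blockEnd k})
    ⟨n, (le_blockStart n).trans (Nat.le_add_right _ _)⟩

lemma blockEnd_lt_of_lt_blockIndex {n k : ℕ} (hk : k < blockIndex n) : blockEnd k < n :=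
  not_le.mp (Nat.notMem_of_lt_sInf (s := {k | n ≤ blockEnd k}) hk)

lemma blockIndex_mono : Monotone blockIndex := fun _ _ h =>
  Nat.sInf_le (h.trans (le_blockEnd_blockIndex _))

lemma blockIndex_blockStart_add_one (k : ℕ) : blockIndex (blockStart k + 1) = k := by
  refine le_antisymm (Nat.sInf_le (show blockStart k + 1 ≤ blockEnd k by simp [blockEnd]))
    (not_lt.mp fun hk => ?_)
  have h₁ := le_blockEnd_blockIndex (blockStart k + 1)
  have h₂ := blockEnd_lt_blockStart_succ (blockIndex (blockStart k + 1))
  have h₃ := blockStart_strictMono.monotone (show blockIndex (blockStart k + 1) + 1 ≤ k by omega)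
  omega

end Blocks

section Scale

variable {α β : ℝ}

/-- A level of local dimension `d` halves the number of pieces and shrinks them by `e^{-rate d}`. -/
def rate (d : ℝ) : ℝ := log 2 / d

lemma rate_pos {d : ℝ} (hd : 0 < d) : 0 < rate d := div_pos (log_pos one_lt_two) hd

lemma mul_rate (γ d : ℝ) : γ * rate d = γ / d * log 2 := by
  rw [rate]
  ring

lemma mul_rate_lt_log_two_iff {γ d : ℝ} (hd : 0 < d) : γ * rate d < log 2 ↔ γ < d := by
  rw [mul_rate, mul_lt_iff_lt_one_left (log_pos one_lt_two), div_lt_one hd]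

lemma mul_rate_le_log_two_iff {γ d : ℝ} (hd : 0 < d) : γ * rate d ≤ log 2 ↔ γ ≤ d := by
  rw [mul_rate, mul_le_iff_le_one_left (log_pos one_lt_two), div_le_one hd]

lemma rate_lt_rate (hα : 0 < α) (hαβ : α < β) : rate β < rate α :=
  div_lt_div_of_pos_left (log_pos one_lt_two) hα hαβ

lemma log_two_lt_rate (hβ : 0 < β) (hβ1 : β < 1) : log 2 < rate β := by
  rw [rate, lt_div_iff₀ hβ]
  nlinarith [log_pos one_lt_two]

def levelRate (α β : ℝ) (i : ℕ) : ℝ := if InBlock i then rate β else rate α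

def logScale (α β : ℝ) (m : ℕ) : ℝ := ∑ i ∈ Finset.range m, levelRate α β i

def scale (α β : ℝ) (m : ℕ) : ℝ := exp (-logScale α β m)

def blockCount (n m : ℕ) : ℕ := ((Finset.Ico n m).filter InBlock).card

def freeCount (n m : ℕ) : ℕ := ((Finset.Ico n m).filter fun i => ¬ InBlock i).card

lemma freeCount_add_blockCount (n m : ℕ) : freeCount n m + blockCount n m = m - n := by
  rw [freeCount, blockCount, add_comm, Finset.card_filter_add_card_filter_not, Nat.card_Ico]

lemma cast_sub_eq_freeCount_add_blockCount (n m : ℕ) :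
    ((m - n : ℕ) : ℝ) = freeCount n m + blockCount n m := by
  exact_mod_cast (freeCount_add_blockCount n m).symm

lemma logScale_sub {n m : ℕ} (h : n ≤ m) :
    logScale α β m - logScale α β n = freeCount n m * rate α + blockCount n m * rate β := by
  rw [logScale, logScale, ← Finset.sum_Ico_eq_sub _ h]
  simp only [levelRate]
  rw [Finset.sum_ite, Finset.sum_const, Finset.sum_const, nsmul_eq_mul, nsmul_eq_mul, freeCount,
    blockCount, add_comm]

section LogScaleBounds

variable (hα : 0 < α) (hαβ : α < β)
include hα hαβ

lemma logScale_sub_le {n m : ℕ} (h : n ≤ m) :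
    logScale α β m - logScale α β n ≤ (m - n : ℕ) * rate α := by
  rw [logScale_sub h, cast_sub_eq_freeCount_add_blockCount]
  nlinarith [rate_lt_rate hα hαβ, (Nat.cast_nonneg (blockCount n m) : (0 : ℝ) ≤ _)]

lemma le_logScale_sub {n m : ℕ} (h : n ≤ m) :
    (m - n : ℕ) * rate β ≤ logScale α β m - logScale α β n := by
  rw [logScale_sub h, cast_sub_eq_freeCount_add_blockCount]
  nlinarith [rate_lt_rate hα hαβ, (Nat.cast_nonneg (freeCount n m) : (0 : ℝ) ≤ _)]

lemma mul_rate_le_logScale (m : ℕ) : m * rate β ≤ logScale α β m := by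
  simpa [logScale] using le_logScale_sub hα hαβ (Nat.zero_le m)

lemma logScale_succ_sub_le (m : ℕ) : logScale α β (m + 1) - logScale α β m ≤ rate α := by
  simpa using logScale_sub_le hα hαβ m.le_succ

end LogScaleBounds

lemma logScale_blockEnd_add_sub {k j : ℕ} (hj : blockEnd k + j ≤ blockStart (k + 1)) :
    logScale α β (blockEnd k + j) - logScale α β (blockStart k) =
      j * rate α + (k + 1) * rate β := by
  have hk := blockStart_le_blockEnd k
  rw [logScale, logScale, ← Finset.sum_Ico_eq_sub _ (hk.trans (Nat.le_add_right _ j)),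
    ← Finset.sum_Ico_consecutive _ hk (Nat.le_add_right _ j)]
  have hblock : ∀ i ∈ Finset.Ico (blockStart k) (blockEnd k), levelRate α β i = rate β :=
    fun i hi => if_pos ⟨k, Finset.mem_Ico.mp hi⟩
  have hfree : ∀ i ∈ Finset.Ico (blockEnd k) (blockEnd k + j), levelRate α β i = rate α :=
    fun i hi => if_neg (not_inBlock_of_blockEnd_le (Finset.mem_Ico.mp hi).1
      ((Finset.mem_Ico.mp hi).2.trans_le hj))
  rw [Finset.sum_congr rfl hblock, Finset.sum_congr rfl hfree]
  simp only [Finset.sum_const, Nat.card_Ico, nsmul_eq_mul, blockEnd, Nat.add_sub_cancel_left]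
  push_cast
  ring

lemma log_scale (m : ℕ) : log (scale α β m) = -logScale α β m := log_exp _

lemma scale_div_scale (n m : ℕ) :
    scale α β n / scale α β m = exp (logScale α β m - logScale α β n) := by
  rw [scale, scale, ← exp_sub]
  ring_nf

lemma isCantorScale_scale (hα : 0 < α) (hαβ : α < β) (hβ : β < 1) :
    IsCantorScale (scale α β) (exp (-rate β)) where
  pos _ := exp_pos _
  zero := by simp [scale, logScale]
  nonneg := (exp_pos _).le
  lt_half := by
    calc exp (-rate β) < exp (-log 2) :=
          exp_lt_exp.mpr (neg_lt_neg (log_two_lt_rate (hα.trans hαβ) hβ))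
      _ = 1 / 2 := by rw [exp_neg, exp_log two_pos, one_div]
  succ_le m := by
    have : rate β ≤ logScale α β (m + 1) - logScale α β m := by
      simpa using le_logScale_sub hα hαβ m.le_succ
    rw [scale, scale, ← exp_add, exp_le_exp]
    linarith

end Scale

section Windows

variable {α β : ℝ}

lemma blockCount_le_of_le_blockStart {n m : ℕ} (hm : m ≤ blockStart (blockIndex (n + 1) + 1)) :
    blockCount n m ≤ blockIndex (n + 1) + 1 := by
  set κ := blockIndex (n + 1)
  have hsub : (Finset.Ico n m).filter InBlock ⊆ Finset.Ico (blockStart κ) (blockEnd κ) := by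
    intro i hi
    obtain ⟨hi, j, hj₁, hj₂⟩ := Finset.mem_filter.mp hi
    rw [Finset.mem_Ico] at hi ⊢
    have hjκ : j = κ := by
      refine le_antisymm (Nat.lt_succ_iff.mp (blockStart_strictMono.lt_iff_lt.mp ?_)) ?_
      · show blockStart j < blockStart (κ + 1)
        omega
      · by_contra! hj
        have := blockEnd_lt_of_lt_blockIndex hj
        omega
    subst hjκ
    exact ⟨hj₁, hj₂⟩
  calc blockCount n m ≤ (Finset.Ico (blockStart κ) (blockEnd κ)).card := Finset.card_le_card hsub
    _ = κ + 1 := by simp [blockEnd]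

lemma blockCount_le_sq {n m K : ℕ} (hK : ∀ j, blockStart j < m → j ≤ K) :
    blockCount n m ≤ (K + 1) ^ 2 := by
  have hsub : (Finset.Ico n m).filter InBlock ⊆
      (Finset.range (K + 1)).biUnion fun j => Finset.Ico (blockStart j) (blockEnd j) := by
    intro i hi
    obtain ⟨hi, j, hj₁, hj₂⟩ := Finset.mem_filter.mp hi
    have := hK j (by rw [Finset.mem_Ico] at hi; omega)
    simp only [Finset.mem_biUnion, Finset.mem_range, Finset.mem_Ico]
    exact ⟨j, by omega, hj₁, hj₂⟩
  calc blockCount n m ≤ _ := Finset.card_le_card hsub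
    _ ≤ ∑ j ∈ Finset.range (K + 1), (Finset.Ico (blockStart j) (blockEnd j)).card :=
        Finset.card_biUnion_le
    _ ≤ ∑ _j ∈ Finset.range (K + 1), (K + 1) := Finset.sum_le_sum fun j hj => by
        simp only [Finset.mem_range] at hj
        simp [blockEnd]
        omega
    _ = (K + 1) ^ 2 := by simp [sq]

/-- A window reaching past the start of the next block contains the whole gap before the last
block it meets, and that gap is cubically longer than all earlier blocks together. -/
lemma mul_blockCount_le_of_blockStart_lt {ρ : ℝ} (hρ : 0 ≤ ρ) {n m : ℕ} (hnm : n ≤ m)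
    (hm : blockStart (blockIndex (n + 1) + 1) < m) :
    ρ * blockCount n m ≤ freeCount n m + ρ ^ 3 := by
  set κ := blockIndex (n + 1)
  set K := Nat.findGreatest (fun k => blockStart k < m) m
  have hκm : κ + 1 ≤ m := (le_blockStart _).trans hm.le
  have hKκ : κ + 1 ≤ K := Nat.le_findGreatest hκm hm
  have hKm : blockStart K < m := Nat.findGreatest_spec (P := fun k => blockStart k < m) hκm hm
  have hK : ∀ j, blockStart j < m → j ≤ K := fun j hj =>
    Nat.le_findGreatest ((le_blockStart j).trans hj.le) hj
  have hB := blockCount_le_sq (n := n) hK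
  have hgap := blockEnd_add_cube_le (K - 1)
  rw [Nat.sub_add_cancel (by omega), show K - 1 + 3 = K + 2 by omega] at hgap
  have hn : n + 1 ≤ blockEnd (K - 1) :=
    (le_blockEnd_blockIndex (n + 1)).trans (blockEnd_strictMono.monotone (by omega))
  have hB' : (blockCount n m : ℝ) ≤ ((K : ℝ) + 1) ^ 2 := by exact_mod_cast hB
  have hF : ((K : ℝ) + 2) ^ 3 - ((K : ℝ) + 1) ^ 2 ≤ freeCount n m := by
    have := freeCount_add_blockCount n m
    have : (((K + 2) ^ 3 : ℕ) : ℝ) ≤ freeCount n m + blockCount n m := by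
      exact_mod_cast (show (K + 2) ^ 3 ≤ freeCount n m + blockCount n m by omega)
    push_cast at this
    linarith
  have hρB : ρ * blockCount n m ≤ ρ * ((K : ℝ) + 1) ^ 2 := mul_le_mul_of_nonneg_left hB' hρ
  rcases le_or_gt ρ ((K : ℝ) + 1) with hρK | hρK
  · have hK0 : (0 : ℝ) ≤ K := K.cast_nonneg
    nlinarith [mul_le_mul_of_nonneg_right hρK (sq_nonneg ((K : ℝ) + 1)), pow_nonneg hρ 3]
  · nlinarith [mul_le_mul_of_nonneg_left (pow_le_pow_left₀ (by positivity) hρK.le 2) hρ]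

lemma blockIndex_pow_four_le (n : ℕ) : blockIndex (n + 1) ^ 4 ≤ n := by
  rcases Nat.eq_zero_or_pos (blockIndex (n + 1)) with h | h
  · simp [h]
  · have h₁ := blockEnd_lt_of_lt_blockIndex (Nat.sub_lt h one_pos)
    have h₂ := succ_pow_four_le_blockStart (blockIndex (n + 1) - 1)
    rw [Nat.sub_add_cancel h] at h₂
    simp only [blockEnd] at h₁
    omega

def windowLog (α β : ℝ) (A : ℕ → ℕ) (k : ℕ) : ℝ := A k * rate α + (k + 1) * rate β

variable (hα : 0 < α) (hαβ : α < β)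
include hα hαβ

lemma mul_blockCount_le_of_windowLog_le {A : ℕ → ℕ} {ρ C₀ : ℝ} (hρ : 0 ≤ ρ) (hC₀ : 0 ≤ C₀)
    (hA : ∀ k : ℕ, ρ * (k + 1) ≤ A k + C₀) {n m : ℕ} (hnm : n ≤ m)
    (h : windowLog α β A (blockIndex (n + 1)) ≤ logScale α β m - logScale α β n) :
    ρ * blockCount n m ≤ freeCount n m + (C₀ + ρ ^ 3) := by
  set κ := blockIndex (n + 1)
  rcases le_or_gt m (blockStart (κ + 1)) with hm | hm
  · have hB : (blockCount n m : ℝ) ≤ κ + 1 := by exact_mod_cast blockCount_le_of_le_blockStart hm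
    have hF : (A κ : ℝ) ≤ freeCount n m := by
      rw [logScale_sub hnm, windowLog] at h
      refine le_of_mul_le_mul_right ?_ (rate_pos hα)
      nlinarith [mul_le_mul_of_nonneg_right hB (rate_pos (hα.trans hαβ)).le]
    calc ρ * blockCount n m ≤ ρ * (κ + 1) := mul_le_mul_of_nonneg_left hB hρ
      _ ≤ A κ + C₀ := hA κ
      _ ≤ _ := by linarith [pow_nonneg hρ 3]
  · linarith [mul_blockCount_le_of_blockStart_lt hρ hnm hm]

lemma mul_le_sub_of_mul_logScale_le {δ : ℝ} (hδ : 0 ≤ δ) {n m : ℕ} (hnm : n ≤ m)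
    (h : δ * logScale α β n ≤ logScale α β m - logScale α β n) :
    δ * rate β / rate α * n ≤ (m - n : ℕ) := by
  have h₁ := logScale_sub_le hα hαβ hnm
  have h₂ := mul_le_mul_of_nonneg_left (mul_rate_le_logScale hα hαβ n) hδ
  rw [div_mul_eq_mul_div, div_le_iff₀ (rate_pos hα)]
  nlinarith

lemma exists_mul_blockCount_le_of_mul_logScale_le {δ ρ : ℝ} (hδ : 0 < δ) (hρ : 0 ≤ ρ) :
    ∃ C, ∀ n m, n ≤ m → δ * logScale α β n ≤ logScale α β m - logScale α β n →
      ρ * blockCount n m ≤ freeCount n m + C := by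
  have ha := rate_pos hα
  have hb := rate_pos (hα.trans hαβ)
  set δ' := δ * rate β / rate α
  have hδ' : 0 < δ' := by positivity
  set K₀ := ⌈2 * (ρ + 1) / δ'⌉₊
  refine ⟨ρ * (K₀ + 1) + ρ ^ 3, fun n m hnm h => ?_⟩
  set κ := blockIndex (n + 1)
  have hρK₀ : 0 ≤ ρ * (K₀ + 1) := by positivity
  rcases le_or_gt m (blockStart (κ + 1)) with hm | hm
  · have hB : (blockCount n m : ℝ) ≤ κ + 1 := by exact_mod_cast blockCount_le_of_le_blockStart hm
    have hρB := mul_le_mul_of_nonneg_left hB hρ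
    rcases le_or_gt κ K₀ with hκ | hκ
    · have : (κ : ℝ) ≤ K₀ := by exact_mod_cast hκ
      nlinarith [pow_nonneg hρ 3, (freeCount n m).cast_nonneg (α := ℝ)]
    -- A long window: its free part alone is longer than `ρ (κ + 1)`.
    have hκ₁ : (1 : ℝ) ≤ κ := by exact_mod_cast (show 1 ≤ κ by omega)
    have hκρ : 2 * (ρ + 1) ≤ δ' * κ := by
      rw [← div_le_iff₀' hδ']
      exact (Nat.le_ceil _).trans (by exact_mod_cast hκ.le)
    have hn : (κ : ℝ) ^ 4 ≤ n := by exact_mod_cast blockIndex_pow_four_le n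
    have hlen := mul_le_sub_of_mul_logScale_le hα hαβ hδ.le hnm h
    have hcount := cast_sub_eq_freeCount_add_blockCount n m
    have hbig : (ρ + 1) * (κ + 1) ≤ δ' * κ ^ 4 := by
      have : (κ : ℝ) + 1 ≤ 2 * κ ^ 3 := by
        nlinarith [one_le_pow₀ (n := 2) hκ₁, one_le_pow₀ (n := 3) hκ₁]
      nlinarith [mul_le_mul_of_nonneg_right hκρ (by positivity : (0 : ℝ) ≤ (κ : ℝ) ^ 3)]
    nlinarith [pow_nonneg hρ 3]
  · linarith [mul_blockCount_le_of_blockStart_lt hρ hnm hm]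

end Windows

section DimSet

variable {X : Type*} [PseudoMetricSpace X] {Φ : ℝ → ℝ} {E : Set X}

def upperDimSet (Φ : ℝ → ℝ) (E : Set X) : Set ℝ :=
  {α : ℝ | ∃ c₁ > (0:ℝ), ∃ c₂ > (0:ℝ), ∀ r R : ℝ,
    0 < r → r ≤ R ^ (1 + Φ R) → R ^ (1 + Φ R) ≤ R → R < c₁ → ∀ z ∈ E,
      coverNumber r (closedBall z R ∩ E) ≤ ENNReal.ofReal (c₂ * (R / r) ^ α)}

lemma mem_upperDimSet_of_le {γ γ' : ℝ} (h : γ ∈ upperDimSet Φ E) (hγ : γ ≤ γ') :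
    γ' ∈ upperDimSet Φ E := by
  obtain ⟨c₁, hc₁, c₂, hc₂, H⟩ := h
  refine ⟨c₁, hc₁, c₂, hc₂, fun r R hr hrρ hρR hRc z hz =>
    (H r R hr hrρ hρR hRc z hz).trans (ENNReal.ofReal_le_ofReal ?_)⟩
  have : 1 ≤ R / r := (one_le_div hr).mpr (hrρ.trans hρR)
  exact mul_le_mul_of_nonneg_left (rpow_le_rpow_of_exponent_le this hγ) hc₂.le

lemma le_of_mem_upperDimSet {x : ℝ} (hx : 0 < x)
    (h : ∀ γ, 0 ≤ γ → γ < x → γ ∉ upperDimSet Φ E) : ∀ γ ∈ upperDimSet Φ E, x ≤ γ := by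
  intro γ hγ
  by_contra! hγx
  rcases le_or_gt 0 γ with h0 | h0
  · exact h γ h0 hγx hγ
  · exact h 0 le_rfl hx (mem_upperDimSet_of_le hγ h0.le)

lemma upperPhiDim_mem_Icc {x y : ℝ} (hlow : ∀ γ ∈ upperDimSet Φ E, x ≤ γ)
    (hup : ∀ γ, y < γ → γ ∈ upperDimSet Φ E) : upperPhiDim Φ E ∈ Icc x y :=
  ⟨le_csInf ⟨y + 1, hup _ (by linarith)⟩ hlow, le_of_forall_pos_le_add fun _ hε =>
    csInf_le ⟨x, hlow⟩ (hup _ (by linarith))⟩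

lemma upperPhiDim_eq {x : ℝ} (hlow : ∀ γ ∈ upperDimSet Φ E, x ≤ γ)
    (hup : ∀ γ, x < γ → γ ∈ upperDimSet Φ E) : upperPhiDim Φ E = x :=
  le_antisymm (upperPhiDim_mem_Icc hlow hup).2 (upperPhiDim_mem_Icc hlow hup).1

end DimSet

lemma exp_nat_mul_log_two (k : ℕ) : exp (k * log 2) = 2 ^ k := by
  rw [mul_comm, exp_mul, exp_log two_pos, rpow_natCast]

lemma two_pow_eq_ofReal (k : ℕ) : (2 : ℝ≥0∞) ^ k = ENNReal.ofReal (2 ^ k) := by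
  rw [ENNReal.ofReal_pow zero_le_two, ENNReal.ofReal_ofNat]

section Master

variable {α β : ℝ} (hα : 0 < α) (hαβ : α < β) (hβ : β < 1)
include hα hαβ hβ

lemma logScale_level_sub_one_le {R : ℝ} (hR : 0 < R) (hR1 : R ≤ 1) :
    logScale α β (level (scale α β) R - 1) ≤ -log R := by
  have hs := isCantorScale_scale hα hαβ hβ
  have h0 : 0 < level (scale α β) R := hs.lt_level hR (hR1.trans_eq hs.zero.symm)
  have := log_le_log hR (le_of_lt_level (Nat.sub_lt h0 one_pos))
  rw [log_scale] at this
  linarith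

lemma lt_logScale_level {r : ℝ} (hr : 0 < r) : -log r < logScale α β (level (scale α β) r) := by
  have := log_lt_log (exp_pos _) ((isCantorScale_scale hα hαβ hβ).apply_level_lt hr)
  rw [← scale, log_scale] at this
  linarith

lemma log_sub_log_le_logScale_sub {r ρ R : ℝ} (hr : 0 < r) (hrρ : r ≤ ρ) (hρR : ρ ≤ R)
    (hR1 : R ≤ 1) :
    log R - log ρ ≤
      logScale α β (level (scale α β) r) - logScale α β (level (scale α β) R - 1) := by
  linarith [log_le_log hr hrρ, lt_logScale_level hα hαβ hβ hr,
    logScale_level_sub_one_le hα hαβ hβ (hr.trans_le (hrρ.trans hρR)) hR1]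

lemma exp_logScale_sub_le_div {r R : ℝ} (hr : 0 < r) (hr1 : r ≤ 1) (hR : 0 < R) :
    exp (logScale α β (level (scale α β) r - 1) - logScale α β (level (scale α β) R)) ≤ R / r := by
  have hs := isCantorScale_scale hα hαβ hβ
  have h0 : 0 < level (scale α β) r := hs.lt_level hr (hr1.trans_eq hs.zero.symm)
  rw [← scale_div_scale]
  exact div_le_div₀ hR.le (hs.apply_level_lt hR).le hr
    (le_of_lt_level (Nat.sub_lt h0 one_pos))

/-- Since `c ^ d < 1 - 2c` for `c = e^{-rate β}`, a ball of radius `R ≤ scale α β n` meets a single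
piece of level `n - d`. -/
lemma coverNumber_le_two_pow_level {d : ℕ} (hd : exp (-rate β) ^ d < 1 - 2 * exp (-rate β))
    (ε : ℕ → Bool) {r R : ℝ} (hr : 0 < r) (hrR : r ≤ R) (hRd : R < scale α β (d + 1)) :
    coverNumber r (closedBall (cantorPoint (scale α β) ε) R ∩ cantorSet (scale α β)) ≤
      2 ^ (level (scale α β) r - (level (scale α β) R - 1) + d) := by
  have hs := isCantorScale_scale hα hαβ hβ
  set n := level (scale α β) R - 1
  have hdn : d + 1 < level (scale α β) R := hs.lt_level (hr.trans_le hrR) hRd.le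
  have hnm := hs.level_anti hr hrR
  have hRn : R < (1 - 2 * exp (-rate β)) * scale α β (n - d) := by
    have h₁ : R ≤ scale α β n := le_of_lt_level (by omega)
    have h₂ := hs.le_mul_pow (show n - d ≤ n by omega)
    rw [show n - (n - d) = d by omega] at h₂
    nlinarith [hs.pos (n - d)]
  have hcover := hs.coverNumber_closedBall_le ε (hs.apply_level_lt hr).le hRn
  rwa [show level (scale α β) r - (n - d) = level (scale α β) r - n + d by omega] at hcover

lemma mem_upperDimSet_of_window_bound (Φ : ℝ → ℝ) {γ : ℝ} (hγ : 0 ≤ γ) (C : ℝ)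
    (H : ∀ r R : ℝ, 0 < r → r ≤ R ^ (1 + Φ R) → R ^ (1 + Φ R) ≤ R → R < 1 →
      ((level (scale α β) r - (level (scale α β) R - 1) : ℕ) : ℝ) * log 2 ≤
        γ * (logScale α β (level (scale α β) r) - logScale α β (level (scale α β) R - 1)) + C) :
    γ ∈ upperDimSet Φ (cantorSet (scale α β)) := by
  have hs := isCantorScale_scale hα hαβ hβ
  set c := exp (-rate β)
  obtain ⟨d, hd⟩ := exists_pow_lt_of_lt_one (by linarith [hs.lt_half] : 0 < 1 - 2 * c)
    (by linarith [hs.lt_half] : c < 1)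
  -- `2 ^ d` pays for the depth `d`, `e ^ (2 γ rate α)` for moving both ends of the window.
  refine ⟨scale α β (d + 1), hs.pos _, exp (C + 2 * γ * rate α + d * log 2), exp_pos _, ?_⟩
  rintro r R hr hrρ hρR hRc _ ⟨ε, rfl⟩
  have hR : 0 < R := hr.trans_le (hrρ.trans hρR)
  have hR1 : R < 1 := hRc.trans_le (hs.strictAnti.antitone (Nat.zero_le _) |>.trans_eq hs.zero)
  refine (coverNumber_le_two_pow_level hα hαβ hβ hd ε hr (hrρ.trans hρR) hRc).trans ?_
  have hdn : d + 1 < level (scale α β) R := hs.lt_level hR hRc.le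
  have hnm := hs.level_anti hr (hrρ.trans hρR)
  set n := level (scale α β) R - 1
  set m := level (scale α β) r
  rw [two_pow_eq_ofReal]
  refine ENNReal.ofReal_le_ofReal ?_
  have hratio := exp_logScale_sub_le_div hα hαβ hβ hr (hrρ.trans hρR |>.trans hR1.le) hR
  rw [show level (scale α β) R = n + 1 by omega] at hratio
  have hT : logScale α β m - logScale α β n ≤
      logScale α β (m - 1) - logScale α β (n + 1) + 2 * rate α := by
    have h₁ := logScale_succ_sub_le hα hαβ (m - 1)
    have h₂ := logScale_succ_sub_le hα hαβ n
    rw [Nat.sub_add_cancel (by omega)] at h₁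
    linarith
  have hH := H r R hr hrρ hρR hR1
  calc (2 : ℝ) ^ (m - n + d) = exp ((((m - n : ℕ) : ℝ) + d) * log 2) := by
        rw [← exp_nat_mul_log_two]
        push_cast
        ring_nf
    _ ≤ exp (C + 2 * γ * rate α + d * log 2) *
          exp (γ * (logScale α β (m - 1) - logScale α β (n + 1))) := by
        rw [← exp_add, exp_le_exp]
        nlinarith
    _ ≤ exp (C + 2 * γ * rate α + d * log 2) * (R / r) ^ γ := by
        gcongr
        rw [mul_comm, exp_mul]
        exact rpow_le_rpow (exp_pos _).le hratio hγ

/-- The witnesses are `R = scale α β n` and `r` a fixed multiple of `scale α β m`, for which the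
ball around any point already contains `2 ^ (m - n)` points that are `2r`-separated. -/
lemma notMem_upperDimSet_of_windows (Φ : ℝ → ℝ) {γ : ℝ}
    (H : ∀ c₁ > (0 : ℝ), ∀ C : ℝ, ∃ n m : ℕ, scale α β n < c₁ ∧
      scale α β m ≤ scale α β n ^ (1 + Φ (scale α β n)) ∧
      scale α β n ^ (1 + Φ (scale α β n)) ≤ scale α β n ∧
      C + γ * (logScale α β m - logScale α β n) < (m - n : ℕ) * log 2) :
    γ ∉ upperDimSet Φ (cantorSet (scale α β)) := by
  have hs := isCantorScale_scale hα hαβ hβ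
  set c := exp (-rate β)
  set κ := (1 - 2 * c) / 4 with hκdef
  have hκ : 0 < κ := by linarith [hs.lt_half]
  rintro ⟨c₁, hc₁, c₂, hc₂, hall⟩
  obtain ⟨n, m, hnc, hmρ, hρn, hwin⟩ := H c₁ hc₁ (log c₂ - γ * log κ)
  have hr : 0 < κ * scale α β m := mul_pos hκ (hs.pos m)
  have hupper := hall _ _ hr ((mul_le_of_le_one_left (hs.pos m).le
    (by linarith [hs.nonneg])).trans hmρ) hρn hnc _ ⟨fun _ => false, rfl⟩
  have hlower := hs.two_pow_le_coverNumber_closedBall (fun _ => false) (R := scale α β n)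
    (r := κ * scale α β m) (m := m + 1) le_rfl
    (by rw [Nat.add_sub_cancel]; nlinarith [hs.pos m, hs.lt_half])
  have hmono : (2 : ℝ≥0∞) ^ (m - n) ≤ 2 ^ (m + 1 - n) :=
    pow_le_pow_right₀ one_le_two (by omega)
  have hreal : c₂ * (scale α β n / (κ * scale α β m)) ^ γ < 2 ^ (m - n) := by
    have hsplit : scale α β n / (κ * scale α β m) =
        exp (logScale α β m - logScale α β n) * κ⁻¹ := by
      rw [← scale_div_scale]
      field_simp
    rw [hsplit, mul_rpow (exp_pos _).le (inv_pos.mpr hκ).le,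
      ← exp_mul, inv_rpow hκ.le, rpow_def_of_pos hκ, ← exp_neg, ← exp_nat_mul_log_two,
      ← exp_log hc₂, ← exp_add, ← exp_add, exp_lt_exp]
    linarith
  have := (hmono.trans hlower).trans hupper
  rw [two_pow_eq_ofReal, ENNReal.ofReal_le_ofReal_iff
    (mul_pos hc₂ (rpow_pos_of_pos (div_pos (hs.pos n) hr) γ)).le] at this
  linarith

end Master

section FreeRatio

/-- Among windows with `ρ B` free levels for `B` block levels, this ratio gives dimension `γ`. -/
def freeRatio (α β γ : ℝ) : ℝ := (1 - γ / β) / (γ / α - 1)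

variable {α β : ℝ} (hα : 0 < α)
include hα

lemma freeRatio_mul {γ : ℝ} (hαγ : α < γ) : freeRatio α β γ * (γ / α - 1) = 1 - γ / β :=
  div_mul_cancel₀ _ (sub_pos.mpr ((one_lt_div hα).mpr hαγ)).ne'

variable (hαβ : α < β)
include hαβ

lemma freeRatio_nonneg {γ : ℝ} (hαγ : α < γ) (hγβ : γ ≤ β) : 0 ≤ freeRatio α β γ :=
  div_nonneg (sub_nonneg.mpr ((div_le_one (hα.trans hαβ)).mpr hγβ))
    (sub_pos.mpr ((one_lt_div hα).mpr hαγ)).le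

lemma freeRatio_le_freeRatio {x γ : ℝ} (hαx : α < x) (hxγ : x ≤ γ) :
    freeRatio α β γ ≤ freeRatio α β x := by
  have hβ0 := hα.trans hαβ
  have hx : 0 < x / α - 1 := sub_pos.mpr ((one_lt_div hα).mpr hαx)
  have hγ : 0 < γ / α - 1 := sub_pos.mpr ((one_lt_div hα).mpr (hαx.trans_le hxγ))
  rw [freeRatio, freeRatio, div_le_div_iff₀ hγ hx, div_sub_one hα.ne', div_sub_one hα.ne',
    one_sub_div hβ0.ne', one_sub_div hβ0.ne']
  field_simp
  nlinarith [mul_le_mul_of_nonneg_left (sub_nonneg.mpr hxγ) (sub_pos.mpr hαβ).le]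

/-- A window made of `B` block levels and `freeRatio x * B` free levels has dimension `x`, so it
carries more than `e ^ (γ · (its log-length))` pieces when `γ < x`. -/
lemma freeRatio_mul_add_pos {x γ : ℝ} (hαx : α < x) (hxβ : x ≤ β) (hγx : γ < x) :
    0 < freeRatio α β x * (log 2 - γ * rate α) + (log 2 - γ * rate β) := by
  have hkey := freeRatio_mul (β := β) hα hαx
  have : freeRatio α β x * (log 2 - γ * rate α) + (log 2 - γ * rate β) =
      log 2 * ((x - γ) * (freeRatio α β x / α + 1 / β)) := by
    rw [mul_rate, mul_rate]
    linear_combination (-log 2) * hkey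
  rw [this]
  have := freeRatio_nonneg hα hαβ hαx hxβ
  have := hα.trans hαβ
  exact mul_pos (log_pos one_lt_two) (mul_pos (sub_pos.mpr hγx) (by positivity))

end FreeRatio

section DimensionBounds

variable {α β : ℝ} (hα : 0 < α) (hαβ : α < β) (hβ : β < 1)
include hα hαβ hβ

lemma mem_upperDimSet_of_beta_lt (Φ : ℝ → ℝ) {γ : ℝ} (hγ : β < γ) :
    γ ∈ upperDimSet Φ (cantorSet (scale α β)) := by
  have hβ0 := hα.trans hαβ
  refine mem_upperDimSet_of_window_bound hα hαβ hβ Φ (by linarith) 0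
    fun r R hr hrρ hρR _ => ?_
  have hnm := (isCantorScale_scale hα hαβ hβ).level_anti hr (hrρ.trans hρR)
  have hT := le_logScale_sub hα hαβ (show level (scale α β) R - 1 ≤ level (scale α β) r by omega)
  have hγb : log 2 ≤ γ * rate β := not_lt.mp fun h => hγ.not_gt ((mul_rate_lt_log_two_iff hβ0).mp h)
  nlinarith [mul_le_mul_of_nonneg_left hT (show 0 ≤ γ by linarith),
    mul_le_mul_of_nonneg_left hγb
      (Nat.cast_nonneg (level (scale α β) r - (level (scale α β) R - 1)) : (0 : ℝ) ≤ _)]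

lemma notMem_upperDimSet_of_lt_alpha {Φ : ℝ → ℝ} (hΦ : ∀ x ∈ Ioo (0 : ℝ) 1, 0 ≤ Φ x) {γ : ℝ}
    (hγ₀ : 0 ≤ γ) (hγ : γ < α) : γ ∉ upperDimSet Φ (cantorSet (scale α β)) := by
  have hs := isCantorScale_scale hα hαβ hβ
  refine notMem_upperDimSet_of_windows hα hαβ hβ Φ fun c₁ hc₁ C => ?_
  obtain ⟨n, hn⟩ := hs.exists_lt (lt_min hc₁ one_pos)
  have hR1 : scale α β n < 1 := hn.trans_le (min_le_right _ _)
  have hρR : scale α β n ^ (1 + Φ (scale α β n)) ≤ scale α β n := by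
    refine (rpow_le_rpow_of_exponent_ge (hs.pos n) hR1.le ?_).trans_eq (rpow_one _)
    exact le_add_of_nonneg_right (hΦ _ ⟨hs.pos n, hR1⟩)
  have hgap : 0 < log 2 - γ * rate α := by
    exact sub_pos.mpr ((mul_rate_lt_log_two_iff hα).mpr hγ)
  have hev₁ := hs.tendsto_zero.eventually_lt_const (rpow_pos_of_pos (hs.pos n)
    (1 + Φ (scale α β n)))
  have hev₂ := ((tendsto_natCast_atTop_atTop.comp (tendsto_sub_atTop_nat n)).atTop_mul_const
    hgap).eventually_gt_atTop C
  obtain ⟨m, hm₁, hm₂, hm₃⟩ := (hev₁.and (hev₂.and (eventually_ge_atTop n))).exists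
  refine ⟨n, m, hn.trans_le (min_le_left _ _), hm₁.le, hρR, ?_⟩
  have hT := logScale_sub_le hα hαβ hm₃
  simp only [Function.comp] at hm₂
  nlinarith [mul_le_mul_of_nonneg_left hT hγ₀]

lemma notMem_upperDimSet_of_blockWindows (Φ : ℝ → ℝ) (A : ℕ → ℕ) {γ : ℝ}
    (hA : ∀ k, blockEnd k + A k ≤ blockStart (k + 1))
    (hΦ : ∀ k, scale α β (blockEnd k + A k) ≤
        scale α β (blockStart k) ^ (1 + Φ (scale α β (blockStart k))) ∧
      scale α β (blockStart k) ^ (1 + Φ (scale α β (blockStart k))) ≤ scale α β (blockStart k))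
    (hvio : Tendsto (fun k : ℕ => ((k + 1 + A k : ℕ) : ℝ) * log 2 - γ * windowLog α β A k)
      atTop atTop) :
    γ ∉ upperDimSet Φ (cantorSet (scale α β)) := by
  have hs := isCantorScale_scale hα hαβ hβ
  refine notMem_upperDimSet_of_windows hα hαβ hβ Φ fun c₁ hc₁ C => ?_
  have hev := (hs.tendsto_zero.comp blockStart_strictMono.tendsto_atTop).eventually_lt_const hc₁
  obtain ⟨k, hk₁, hk₂⟩ := (hev.and (hvio.eventually_gt_atTop C)).exists
  refine ⟨blockStart k, blockEnd k + A k, hk₁, (hΦ k).1, (hΦ k).2, ?_⟩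
  rw [logScale_blockEnd_add_sub (hA k),
    show blockEnd k + A k - blockStart k = k + 1 + A k by simp only [blockEnd]; omega]
  simp only [windowLog] at hk₂
  linarith

lemma mem_upperDimSet_of_blockCount_le (Φ : ℝ → ℝ) {γ : ℝ} (hαγ : α < γ) (C : ℝ)
    (H : ∀ r R : ℝ, 0 < r → r ≤ R ^ (1 + Φ R) → R ^ (1 + Φ R) ≤ R → R < 1 →
      freeRatio α β γ * blockCount (level (scale α β) R - 1) (level (scale α β) r) ≤
        freeCount (level (scale α β) R - 1) (level (scale α β) r) + C) :
    γ ∈ upperDimSet Φ (cantorSet (scale α β)) := by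
  have hγα : 0 < γ / α - 1 := sub_pos.mpr ((one_lt_div hα).mpr hαγ)
  refine mem_upperDimSet_of_window_bound hα hαβ hβ Φ (by linarith) ((γ / α - 1) * C * log 2)
    fun r R hr hrρ hρR hR1 => ?_
  have hnm := (isCantorScale_scale hα hαβ hβ).level_anti hr (hrρ.trans hρR)
  have hB := mul_le_mul_of_nonneg_left (H r R hr hrρ hρR hR1) hγα.le
  rw [mul_left_comm, ← mul_assoc, freeRatio_mul hα hαγ] at hB
  set n := level (scale α β) R - 1
  set m := level (scale α β) r
  rw [cast_sub_eq_freeCount_add_blockCount, logScale_sub (by omega), mul_add, ← mul_assoc,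
    ← mul_assoc, mul_rate, mul_rate]
  have := (log_pos one_lt_two).le
  linear_combination log 2 * hB

lemma mem_upperDimSet_const {δ γ : ℝ} (hδ : 0 < δ) (hαγ : α < γ) (hγβ : γ ≤ β) :
    γ ∈ upperDimSet (fun _ => δ) (cantorSet (scale α β)) := by
  have hs := isCantorScale_scale hα hαβ hβ
  obtain ⟨C, hC⟩ := exists_mul_blockCount_le_of_mul_logScale_le hα hαβ hδ
    (freeRatio_nonneg hα hαβ hαγ hγβ)
  refine mem_upperDimSet_of_blockCount_le hα hαβ hβ _ hαγ C fun r R hr hrρ hρR hR1 => ?_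
  have hR : 0 < R := hr.trans_le (hrρ.trans hρR)
  have hnm := hs.level_anti hr (hrρ.trans hρR)
  have hwin := log_sub_log_le_logScale_sub hα hαβ hβ hr hrρ hρR hR1.le
  have hT := logScale_level_sub_one_le hα hαβ hβ hR hR1.le
  rw [log_rpow hR] at hwin
  exact hC _ _ (by omega) (by nlinarith)

end DimensionBounds

section BlockPhi

variable {α β : ℝ} {A : ℕ → ℕ}

lemma windowLog_nonneg (hα : 0 < α) (hαβ : α < β) (k : ℕ) : 0 ≤ windowLog α β A k := by
  have := rate_pos hα
  have := rate_pos (hα.trans hαβ)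
  unfold windowLog
  positivity

lemma windowLog_mono (hα : 0 < α) (hαβ : α < β) (hA : Monotone A) :
    Monotone (windowLog α β A) := fun i j hij => by
  have := rate_pos hα
  have := rate_pos (hα.trans hαβ)
  have h₁ : (A i : ℝ) ≤ A j := by exact_mod_cast hA hij
  have h₂ : (i : ℝ) ≤ j := by exact_mod_cast hij
  unfold windowLog
  nlinarith

/-- The dimension function whose window at the scale of `R` is block `blockIndex (level R)`
followed by `A` of that index free levels. -/
def blockPhi (α β : ℝ) (A : ℕ → ℕ) (R : ℝ) : ℝ :=
  windowLog α β A (blockIndex (level (scale α β) R)) / -log R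

lemma rpow_one_add_blockPhi {R : ℝ} (hR : 0 < R) (hR1 : R < 1) :
    R ^ (1 + blockPhi α β A R) = R * exp (-windowLog α β A (blockIndex (level (scale α β) R))) := by
  have hlog : log R ≠ 0 := (log_neg hR hR1).ne
  have : log R * (1 + blockPhi α β A R) =
      log R + -windowLog α β A (blockIndex (level (scale α β) R)) := by
    rw [blockPhi]
    field_simp
  rw [rpow_def_of_pos hR, this, exp_add, exp_log hR]

variable (hα : 0 < α) (hαβ : α < β) (hβ : β < 1)
include hα hαβ hβ

lemma isDimensionFunction_blockPhi (hA : Monotone A) : IsDimensionFunction (blockPhi α β A) := by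
  have hs := isCantorScale_scale hα hαβ hβ
  refine ⟨fun x hx => div_nonneg (windowLog_nonneg hα hαβ _)
    (neg_nonneg.mpr (log_nonpos hx.1.le hx.2.le)), fun x hx y hy hxy => ?_, ?_⟩
  · rw [rpow_one_add_blockPhi hx.1 hx.2, rpow_one_add_blockPhi hy.1 hy.2]
    refine mul_le_mul hxy (exp_le_exp.mpr (neg_le_neg (windowLog_mono hα hαβ hA
      (blockIndex_mono (hs.level_anti hx.1 hxy))))) (exp_pos _).le hy.1.le
  · refine squeeze_zero' (eventually_nhdsWithin_of_forall fun x hx => (rpow_pos_of_pos hx.1 _).le)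
      (eventually_nhdsWithin_of_forall fun x hx => ?_) (tendsto_id.mono_left nhdsWithin_le_nhds)
    rw [rpow_one_add_blockPhi hx.1 hx.2]
    exact mul_le_of_le_one_right hx.1.le
      (exp_le_one_iff.mpr (neg_nonpos.mpr (windowLog_nonneg hα hαβ _)))

lemma blockPhi_le (hA : ∀ k, A k ≤ (k + 1) ^ 2) {x : ℝ} (hx : x ∈ Ioo (0 : ℝ) 1)
    (hκ : 1 ≤ blockIndex (level (scale α β) x)) :
    blockPhi α β A x ≤ 8 * rate α / rate β / blockIndex (level (scale α β) x) := by
  have hs := isCantorScale_scale hα hαβ hβ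
  have ha := rate_pos hα
  have hb := rate_pos (hα.trans hαβ)
  have hba := rate_lt_rate hα hαβ
  set κ := blockIndex (level (scale α β) x)
  have hlev : 0 < level (scale α β) x := hs.lt_level hx.1 (hx.2.le.trans_eq hs.zero.symm)
  have hκ₁ : (1 : ℝ) ≤ κ := by exact_mod_cast hκ
  have hκ4 : (κ : ℝ) ^ 4 ≤ (level (scale α β) x - 1 : ℕ) := by
    have := blockIndex_pow_four_le (level (scale α β) x - 1)
    rw [Nat.sub_add_cancel hlev] at this
    exact_mod_cast this
  have hlog : (κ : ℝ) ^ 4 * rate β ≤ -log x := by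
    linarith [logScale_level_sub_one_le hα hαβ hβ hx.1 hx.2.le,
      mul_rate_le_logScale hα hαβ (level (scale α β) x - 1), mul_le_mul_of_nonneg_right hκ4 hb.le]
  have hW : windowLog α β A κ ≤ 8 * κ ^ 2 * rate α := by
    have hAκ : (A κ : ℝ) ≤ (κ + 1) ^ 2 := by exact_mod_cast hA κ
    have h₁ := mul_le_mul_of_nonneg_right hAκ ha.le
    have h₂ : ((κ : ℝ) + 1) * rate β ≤ (κ + 1) * rate α :=
      mul_le_mul_of_nonneg_left hba.le (by positivity)
    have h₃ : ((κ : ℝ) + 1) ^ 2 + (κ + 1) ≤ 8 * κ ^ 2 := by nlinarith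
    unfold windowLog
    linear_combination h₁ + h₂ + rate α * h₃
  rw [blockPhi, div_le_div_iff₀ (hlog.trans_lt' (by positivity)) (by positivity)]
  calc windowLog α β A κ * κ ≤ 8 * κ ^ 2 * rate α * κ := by gcongr
    _ ≤ 8 * rate α * κ ^ 4 := by
        linear_combination (8 * rate α) * pow_le_pow_right₀ hκ₁ (show 3 ≤ 4 by norm_num)
    _ = 8 * rate α / rate β * (κ ^ 4 * rate β) := by field_simp
    _ ≤ 8 * rate α / rate β * -log x := by gcongr

lemma tendsto_blockPhi (hA : ∀ k, A k ≤ (k + 1) ^ 2) :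
    Tendsto (blockPhi α β A) (𝓝[Ioo 0 1] 0) (𝓝 0) := by
  have hs := isCantorScale_scale hα hαβ hβ
  have hκ : Tendsto (fun x => blockIndex (level (scale α β) x)) (𝓝[Ioo 0 1] 0) atTop :=
    (blockIndex_mono.tendsto_atTop_atTop fun K => ⟨blockStart K + 1,
      (blockIndex_blockStart_add_one K).ge⟩).comp
      (hs.tendsto_level.mono_left (nhdsWithin_mono _ Ioo_subset_Ioi_self))
  refine squeeze_zero' ?_ ?_ ((tendsto_const_div_atTop_nhds_zero_nat (8 * rate α / rate β)).comp hκ)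
  · exact eventually_nhdsWithin_of_forall fun x hx =>
      div_nonneg (windowLog_nonneg hα hαβ _) (neg_nonneg.mpr (log_nonpos hx.1.le hx.2.le))
  · filter_upwards [self_mem_nhdsWithin, hκ.eventually_ge_atTop 1] with x hx hx₁
    exact blockPhi_le hα hαβ hβ hA hx hx₁

lemma mem_upperDimSet_blockPhi {A : ℕ → ℕ} {γ C₀ : ℝ} (hαγ : α < γ) (hγβ : γ ≤ β)
    (hC₀ : 0 ≤ C₀) (hA : ∀ k : ℕ, freeRatio α β γ * (k + 1) ≤ A k + C₀) :
    γ ∈ upperDimSet (blockPhi α β A) (cantorSet (scale α β)) := by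
  have hs := isCantorScale_scale hα hαβ hβ
  refine mem_upperDimSet_of_blockCount_le hα hαβ hβ _ hαγ (C₀ + freeRatio α β γ ^ 3)
    fun r R hr hrρ hρR hR1 => ?_
  have hR : 0 < R := hr.trans_le (hrρ.trans hρR)
  have hnm := hs.level_anti hr (hrρ.trans hρR)
  have hlev : 0 < level (scale α β) R := hs.lt_level hR (hR1.le.trans_eq hs.zero.symm)
  have hwin := log_sub_log_le_logScale_sub hα hαβ hβ hr hrρ hρR hR1.le
  rw [rpow_one_add_blockPhi hR hR1, log_mul hR.ne' (exp_pos _).ne', log_exp] at hwin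
  refine mul_blockCount_le_of_windowLog_le hα hαβ (freeRatio_nonneg hα hαβ hαγ hγβ) hC₀ hA
    (by omega) ?_
  rw [Nat.sub_add_cancel hlev]
  linarith

end BlockPhi

section ExtraLevels

/-- About `freeRatio x` free levels per level of block `k`, capped at `(k + 1) ^ 2` so that the
window ends before the next block and `blockPhi` tends to `0`; for `x = α` the cap itself. -/
def extraLevels (α β x : ℝ) (k : ℕ) : ℕ :=
  if x ≤ α then (k + 1) ^ 2 else min ⌈freeRatio α β x * (k + 1)⌉₊ ((k + 1) ^ 2)

variable {α β x : ℝ}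

lemma extraLevels_le_sq (k : ℕ) : extraLevels α β x k ≤ (k + 1) ^ 2 := by
  unfold extraLevels
  split_ifs
  exacts [le_rfl, min_le_right _ _]

lemma blockEnd_add_extraLevels_le (k : ℕ) :
    blockEnd k + extraLevels α β x k ≤ blockStart (k + 1) := by
  have h₁ := blockEnd_add_cube_le k
  have h₂ : (k + 1) ^ 2 ≤ (k + 3) ^ 3 :=
    (Nat.pow_le_pow_left (by omega) 2).trans (Nat.pow_le_pow_right (by omega) (by omega))
  have := extraLevels_le_sq (α := α) (β := β) (x := x) k
  omega

variable (hα : 0 < α) (hαβ : α < β)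
include hα hαβ

lemma extraLevels_mono (hxβ : x ≤ β) : Monotone (extraLevels α β x) := by
  intro i j hij
  have hsq : (i + 1) ^ 2 ≤ (j + 1) ^ 2 := Nat.pow_le_pow_left (by omega) 2
  unfold extraLevels
  split_ifs with hx
  · exact hsq
  · refine min_le_min (Nat.ceil_mono (mul_le_mul_of_nonneg_left ?_
      (freeRatio_nonneg hα hαβ (not_le.mp hx) hxβ))) hsq
    exact_mod_cast Nat.succ_le_succ hij

lemma le_extraLevels_add {γ : ℝ} (hαx : α ≤ x) (hxγ : x < γ) (hγβ : γ ≤ β) (k : ℕ) :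
    freeRatio α β γ * (k + 1) ≤ extraLevels α β x k + freeRatio α β γ ^ 2 := by
  have hρ := freeRatio_nonneg hα hαβ (hαx.trans_lt hxγ) hγβ
  have hsq : freeRatio α β γ * (k + 1) ≤ ((k + 1) ^ 2 : ℕ) + freeRatio α β γ ^ 2 := by
    push_cast
    nlinarith [sq_nonneg (freeRatio α β γ - (k + 1))]
  unfold extraLevels
  split_ifs with hx
  · exact hsq
  · have hceil : freeRatio α β γ * (k + 1) ≤ ⌈freeRatio α β x * (k + 1)⌉₊ :=
      (mul_le_mul_of_nonneg_right (freeRatio_le_freeRatio hα hαβ (not_le.mp hx) hxγ.le)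
        (by positivity)).trans (Nat.le_ceil _)
    rw [Nat.cast_min]
    nlinarith [le_min (hceil.trans (le_add_of_nonneg_right (sq_nonneg (freeRatio α β γ))))
      hsq, min_add_add_right (⌈freeRatio α β x * (k + 1)⌉₊ : ℝ) (((k + 1) ^ 2 : ℕ) : ℝ)
      (freeRatio α β γ ^ 2)]

lemma tendsto_extraLevels {γ : ℝ} (hxβ : x < β) (hγx : γ < x) :
    Tendsto (fun k : ℕ => ((k + 1 + extraLevels α β x k : ℕ) : ℝ) * log 2 -
      γ * windowLog α β (extraLevels α β x) k) atTop atTop := by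
  have hlog := log_pos one_lt_two
  have hβ0 := hα.trans hαβ
  have hQ : ∀ k : ℕ, ((k + 1 + extraLevels α β x k : ℕ) : ℝ) * log 2 -
      γ * windowLog α β (extraLevels α β x) k = extraLevels α β x k * (log 2 - γ * rate α) +
        (k + 1) * (log 2 - γ * rate β) := fun k => by
    unfold windowLog
    push_cast
    ring
  have hcb : 0 < log 2 - γ * rate β :=
    sub_pos.mpr ((mul_rate_lt_log_two_iff hβ0).mpr (hγx.trans hxβ))
  simp_rw [hQ]
  rcases le_or_gt γ α with hγα | hαγ
  · have hca : 0 ≤ log 2 - γ * rate α := sub_nonneg.mpr ((mul_rate_le_log_two_iff hα).mpr hγα)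
    refine tendsto_atTop_mono (fun k => ?_) (tendsto_natCast_atTop_atTop.atTop_mul_const hcb)
    nlinarith [(extraLevels α β x k).cast_nonneg (α := ℝ)]
  -- For `γ > α` the free levels count against the window, but only linearly in `k`.
  have hαx : α < x := hαγ.trans hγx
  have hx : ¬ x ≤ α := not_le.mpr hαx
  set ρ := freeRatio α β x
  have hρ := freeRatio_nonneg hα hαβ hαx hxβ.le
  have hca : log 2 - γ * rate α < 0 :=
    sub_neg.mpr (not_le.mp fun h => hαγ.not_ge ((mul_rate_le_log_two_iff hα).mp h))
  have hcoef := freeRatio_mul_add_pos hα hαβ hαx hxβ.le hγx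
  refine tendsto_atTop_mono (fun k => ?_)
    ((tendsto_natCast_atTop_atTop.atTop_mul_const hcoef).atTop_add (tendsto_const_nhds (x :=
      ρ * (log 2 - γ * rate α) + (log 2 - γ * rate β) + (log 2 - γ * rate α))))
  have hA : (extraLevels α β x k : ℝ) ≤ ρ * (k + 1) + 1 := by
    simp only [extraLevels, if_neg hx, Nat.cast_min]
    exact (min_le_left _ _).trans (Nat.ceil_lt_add_one (by positivity)).le
  nlinarith [mul_le_mul_of_nonpos_right hA hca.le]

end ExtraLevels

section Assembly

lemma isDimensionFunction_zero : IsDimensionFunction fun _ => 0 := by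
  refine ⟨fun _ _ => le_rfl, fun x _ y _ hxy => by simpa using hxy, ?_⟩
  simp only [add_zero, rpow_one]
  exact tendsto_id.mono_left nhdsWithin_le_nhds

variable {α β : ℝ} (hα : 0 < α) (hαβ : α < β) (hβ : β < 1)
include hα hαβ hβ

lemma scale_blockStart_rpow {A : ℕ → ℕ} (hA : ∀ k, blockEnd k + A k ≤ blockStart (k + 1))
    (k : ℕ) : scale α β (blockStart k) ^ (1 + blockPhi α β A (scale α β (blockStart k))) =
      scale α β (blockEnd k + A k) := by
  have hs := isCantorScale_scale hα hαβ hβ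
  have h1 : scale α β (blockStart k) < 1 :=
    (hs.strictAnti (by have := add_sixteen_le_blockStart k; omega)).trans_eq hs.zero
  rw [rpow_one_add_blockPhi (hs.pos _) h1, hs.level_self, blockIndex_blockStart_add_one, scale,
    scale, ← exp_add, windowLog, ← logScale_blockEnd_add_sub (hA k)]
  ring_nf

lemma upperPhiDim_mem_Icc_of_nonneg {Φ : ℝ → ℝ} (hΦ : ∀ x ∈ Ioo (0 : ℝ) 1, 0 ≤ Φ x) :
    upperPhiDim Φ (cantorSet (scale α β)) ∈ Icc α β :=
  upperPhiDim_mem_Icc (le_of_mem_upperDimSet hα fun _ hγ₀ hγ =>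
    notMem_upperDimSet_of_lt_alpha hα hαβ hβ hΦ hγ₀ hγ)
    fun _ hγ => mem_upperDimSet_of_beta_lt hα hαβ hβ Φ hγ

lemma upperPhiDim_const {δ : ℝ} (hδ : 0 < δ) :
    upperPhiDim (fun _ => δ) (cantorSet (scale α β)) = α :=
  upperPhiDim_eq (le_of_mem_upperDimSet hα fun _ hγ₀ hγ =>
    notMem_upperDimSet_of_lt_alpha hα hαβ hβ (fun _ _ => hδ.le) hγ₀ hγ) fun γ hγ =>
      (le_or_gt γ β).elim (mem_upperDimSet_const hα hαβ hβ hδ hγ)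
        (mem_upperDimSet_of_beta_lt hα hαβ hβ _)

lemma upperPhiDim_zero : upperPhiDim (fun _ => 0) (cantorSet (scale α β)) = β := by
  have hs := isCantorScale_scale hα hαβ hβ
  refine upperPhiDim_eq (le_of_mem_upperDimSet (hα.trans hαβ) fun γ _ hγ => ?_)
    fun _ hγ => mem_upperDimSet_of_beta_lt hα hαβ hβ _ hγ
  refine notMem_upperDimSet_of_blockWindows hα hαβ hβ _ (fun _ => 0)
    (fun k => by simpa using (blockEnd_lt_blockStart_succ k).le)
    (fun k => by simpa using hs.strictAnti.antitone (blockStart_le_blockEnd k)) ?_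
  have hcb : 0 < log 2 - γ * rate β := sub_pos.mpr ((mul_rate_lt_log_two_iff (hα.trans hαβ)).mpr hγ)
  refine tendsto_atTop_mono (fun k => ?_) (tendsto_natCast_atTop_atTop.atTop_mul_const hcb)
  simp only [windowLog]
  push_cast
  nlinarith

lemma upperPhiDim_blockPhi {x : ℝ} (hαx : α ≤ x) (hxβ : x < β) :
    upperPhiDim (blockPhi α β (extraLevels α β x)) (cantorSet (scale α β)) = x := by
  have hs := isCantorScale_scale hα hαβ hβ
  refine upperPhiDim_eq (le_of_mem_upperDimSet (hα.trans_le hαx) fun γ _ hγ =>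
    notMem_upperDimSet_of_blockWindows hα hαβ hβ _ _ blockEnd_add_extraLevels_le (fun k => ?_)
      (tendsto_extraLevels hα hαβ hxβ hγ)) fun γ hγ => ?_
  · rw [scale_blockStart_rpow hα hαβ hβ blockEnd_add_extraLevels_le]
    exact ⟨le_rfl, hs.strictAnti.antitone ((blockStart_le_blockEnd k).trans (Nat.le_add_right _ _))⟩
  · rcases le_or_gt γ β with hγβ | hγβ
    · exact mem_upperDimSet_blockPhi hα hαβ hβ (hαx.trans_lt hγ) hγβ (sq_nonneg _)
        (le_extraLevels_add hα hαβ hαx hγ hγβ)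
    · exact mem_upperDimSet_of_beta_lt hα hαβ hβ _ hγβ

end Assembly

end PhiDimension

/-- For any `0 < α < β < 1` there is a set `E ⊆ [0,1]` whose set of upper `Φ`-dimensions,
over all dimension functions `Φ` tending to `0`, is exactly `[α, β]`, with
`dim_qA E = α` and `dim_A E = β`. -/
theorem exists_set_with_interval_of_phiDims (α β : ℝ) (hα : 0 < α) (hαβ : α < β)
    (hβ : β < 1) :
    ∃ E : Set ℝ, E ⊆ Icc 0 1 ∧
      {x : ℝ | ∃ Φ : ℝ → ℝ, IsDimensionFunction Φ ∧
          Tendsto Φ (nhdsWithin 0 (Ioo 0 1)) (nhds 0) ∧ upperPhiDim Φ E = x} = Icc α β ∧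
      quasiAssouadDim E = α ∧ assouadDim E = β := by
  open PhiDimension in
  refine ⟨cantorSet (scale α β), ?_, ?_, ?_, upperPhiDim_zero hα hαβ hβ⟩
  · rintro _ ⟨ε, rfl⟩
    exact (isCantorScale_scale hα hαβ hβ).cantorPoint_mem_Icc ε
  · ext x
    refine ⟨fun ⟨Φ, hΦ, _, hx⟩ => hx ▸ upperPhiDim_mem_Icc_of_nonneg hα hαβ hβ hΦ.1,
      fun ⟨hαx, hxβ⟩ => ?_⟩
    rcases hxβ.lt_or_eq with hxβ | rfl
    · exact ⟨_, isDimensionFunction_blockPhi hα hαβ hβ (extraLevels_mono hα hαβ hxβ.le),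
        tendsto_blockPhi hα hαβ hβ extraLevels_le_sq, upperPhiDim_blockPhi hα hαβ hβ hαx hxβ⟩
    · exact ⟨_, isDimensionFunction_zero, tendsto_const_nhds, upperPhiDim_zero hα hαβ hβ⟩
  · have : Nonempty (Ioo (0 : ℝ) 1) := ⟨⟨1 / 2, by norm_num⟩⟩
    refine (iSup_congr fun θ => upperPhiDim_const hα hαβ hβ ?_).trans ciSup_const
    exact sub_pos.mpr ((one_lt_div θ.2.1).mpr θ.2.2)

end
end

section
/- Let a = (a_n) be a decreasing summable sequence with Σ_n a_n = 1, and let F and G be two compact sets in 𝒞_a (complementary sets of a). Then for every r > 0, 1/16 ≤ N_r(F)/N_r(G) ≤ 16. -/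
open Set Metric Filter Topology
open scoped ENNReal

noncomputable section

/-!
Cover `[0,1]` by the half-open cells `[2rk, 2r(k+1))`, and call a gap long if its length exceeds
`2r`; there are finitely many long gaps, with the same lengths in `F` and in `G`.
A cell meeting `F` either contains an endpoint of a long gap of `F` (at most `2` cells per long
gap), sticks out of `[0,1]` (one cell), or lies in `[0,1]` away from the long gaps; the cells of
the last kind have total length at most `1 - Σ_long a`.
Conversely, in a cover of `G` by `r`-balls the left endpoints of the long gaps of `G` lie in
distinct balls, and the same balls enlarged to radius `3r` cover every short gap, hence
`1 - Σ_long a ≤ 6r N_r(G)`. Together, `N_r(F) ≤ 6 N_r(G)`.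
-/

open MeasureTheory Function

theorem Set.Ioo_le_or_le_of_disjoint {α : Type*} [LinearOrder α] [DenselyOrdered α]
    {x₁ x₂ y₁ y₂ : α} (h : Disjoint (Ioo x₁ x₂) (Ioo y₁ y₂)) (hx : x₁ < x₂) (hy : y₁ < y₂) :
    x₂ ≤ y₁ ∨ y₂ ≤ x₁ := by
  rw [Ioo_disjoint_Ioo, min_le_iff, le_max_iff, le_max_iff] at h
  rcases h with (h | h) | (h | h)
  · exact absurd h hx.not_ge
  · exact .inl h
  · exact .inr h
  · exact absurd h hy.not_ge

theorem Set.OrdConnected.left_mem_or_right_mem {α : Type*} [LinearOrder α] {I : Set α}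
    (hI : I.OrdConnected) {e p u v : α} (he : e ∈ I) (hp : p ∈ I) (he' : e ∉ Ioo u v)
    (hp' : p ∈ Ioo u v) : u ∈ I ∨ v ∈ I := by
  rcases le_or_gt e u with heu | hue
  · exact .inl (hI.out he hp ⟨heu, hp'.1.le⟩)
  · have hve : v ≤ e := not_lt.1 fun hev => he' ⟨hue, hev⟩
    exact .inr (hI.out hp he ⟨hp'.2.le, hve⟩)

theorem Finset.card_le_card_of_forall_lt_dist {ι X : Type*} [PseudoMetricSpace X] {p : ι → X}
    {L : Finset ι} {t : Finset X} {r : ℝ} (hcov : ∀ j ∈ L, ∃ x ∈ t, dist (p j) x ≤ r)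
    (hsep : ∀ i ∈ L, ∀ j ∈ L, i ≠ j → 2 * r < dist (p i) (p j)) : L.card ≤ t.card := by
  refine card_le_card_of_forall_subsingleton (fun j x => dist (p j) x ≤ r) hcov
    fun x _ i ⟨hi, hix⟩ j ⟨hj, hjx⟩ => ?_
  by_contra hne
  linarith [hsep i hi j hj hne, dist_triangle_right (p i) (p j) x]

theorem le_mul_coverNumber_of_forall {X : Type*} [PseudoMetricSpace X] {r : ℝ}
    {E F : Set X} {k : ℕ} (hk : k ≠ 0) (h : ∀ t : Finset X, F ⊆ ⋃ x ∈ t, closedBall x r →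
      ∃ s : Finset X, E ⊆ ⋃ x ∈ s, closedBall x r ∧ s.card ≤ k * t.card) :
    coverNumber r E ≤ k * coverNumber r F := by
  have hk₀ : (k : ℝ≥0∞) ≠ 0 := by exact_mod_cast hk
  simp only [coverNumber, ENNReal.mul_iInf_of_ne hk₀ (ENNReal.natCast_ne_top k)]
  refine le_iInf₂ fun t ht => ?_
  obtain ⟨s, hs, hst⟩ := h t ht
  exact (iInf₂_le s hs).trans (by exact_mod_cast hst)

theorem exists_dist_le_of_subset_iUnion_closedBall {X : Type*} [PseudoMetricSpace X] {r : ℝ}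
    {E : Set X} {t : Finset X} (ht : E ⊆ ⋃ x ∈ t, closedBall x r) {y : X} (hy : y ∈ E) :
    ∃ x ∈ t, dist y x ≤ r := by
  simpa using ht hy

theorem Summable.exists_finset_mem_iff_lt {ι : Type*} {f : ι → ℝ} (hf : Summable f) {ε : ℝ}
    (hε : 0 < ε) : ∃ L : Finset ι, ∀ j, j ∈ L ↔ ε < f j := by
  have hfin : {j | ¬ f j ≤ ε}.Finite :=
    eventually_cofinite.1 (hf.tendsto_cofinite_zero.eventually (eventually_le_nhds hε))
  exact ⟨hfin.toFinset, fun j => by simp⟩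

def gap (a c : ℕ → ℝ) (j : ℕ) : Set ℝ := Ioo (c j) (c j + a (j + 1))

def gapComplement (a c : ℕ → ℝ) : Set ℝ := Icc 0 1 \ ⋃ j, gap a c j

theorem isComplementarySet_iff {a : ℕ → ℝ} {E : Set ℝ} :
    IsComplementarySet a E ↔ ∃ c : ℕ → ℝ, (∀ j, 0 ≤ c j ∧ c j + a (j + 1) ≤ 1) ∧
      Pairwise (Disjoint on gap a c) ∧ E = gapComplement a c :=
  Iff.rfl

section Gaps

variable {a c : ℕ → ℝ}

theorem gap_subset_Icc (hc : ∀ j, 0 ≤ c j ∧ c j + a (j + 1) ≤ 1) (j : ℕ) :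
    gap a c j ⊆ Icc 0 1 :=
  fun _ hx => ⟨(hc j).1.trans hx.1.le, hx.2.le.trans (hc j).2⟩

theorem zero_mem_gapComplement (hc : ∀ j, 0 ≤ c j) : (0 : ℝ) ∈ gapComplement a c :=
  ⟨left_mem_Icc.2 zero_le_one, fun hmem => by
    obtain ⟨j, hj⟩ := mem_iUnion.1 hmem
    exact (hc j).not_gt hj.1⟩

theorem left_mem_gapComplement (hc : ∀ j, 0 ≤ c j ∧ c j + a (j + 1) ≤ 1)
    (hdisj : Pairwise (Disjoint on gap a c)) {j : ℕ} (hj : 0 < a (j + 1)) :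
    c j ∈ gapComplement a c := by
  refine ⟨⟨(hc j).1, by linarith [(hc j).2]⟩, fun hmem => ?_⟩
  obtain ⟨i, hi⟩ := mem_iUnion.1 hmem
  rcases eq_or_ne i j with rfl | hij
  · exact lt_irrefl _ hi.1
  · rcases Ioo_le_or_le_of_disjoint (hdisj hij) (by linarith [hi.1, hi.2]) (by linarith) with
      h | h <;> linarith [hi.1, hi.2]

theorem dist_lt_of_mem_gap_of_lt {i j : ℕ} (hdisj : Pairwise (Disjoint on gap a c)) (hij : i ≠ j)
    {r : ℝ} (hr : 0 ≤ r) (hi : r < a (i + 1)) (hj : r < a (j + 1)) : r < dist (c i) (c j) := by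
  rw [Real.dist_eq, lt_abs]
  rcases Ioo_le_or_le_of_disjoint (hdisj hij) (by linarith) (by linarith) with h | h
  · right; linarith
  · left; linarith

end Gaps

def gridCell (r : ℝ) (k : ℕ) : Set ℝ := Ico (2 * r * k) (2 * r * (k + 1))

section GridCells

variable {r : ℝ}

theorem floor_eq_of_mem_gridCell (hr : 0 < r) {y : ℝ} {k : ℕ} (hy : y ∈ gridCell r k) :
    ⌊y / (2 * r)⌋₊ = k := by
  have h2r : 0 < 2 * r := by positivity
  rw [Nat.floor_eq_iff (div_nonneg ((by positivity : (0 : ℝ) ≤ 2 * r * k).trans hy.1) h2r.le),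
    le_div_iff₀ h2r, div_lt_iff₀ h2r]
  exact ⟨by linarith [hy.1], by linarith [hy.2]⟩

theorem mem_gridCell_floor (hr : 0 < r) {y : ℝ} (hy : 0 ≤ y) : y ∈ gridCell r ⌊y / (2 * r)⌋₊ := by
  have h2r : 0 < 2 * r := by positivity
  have h := (Nat.floor_eq_iff (div_nonneg hy h2r.le)).1 (rfl : ⌊y / (2 * r)⌋₊ = _)
  rw [le_div_iff₀ h2r, div_lt_iff₀ h2r] at h
  exact ⟨by linarith [h.1], by linarith [h.2]⟩

theorem pairwise_disjoint_gridCell (hr : 0 < r) : Pairwise (Disjoint on gridCell r) :=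
  fun _ _ hkl => Set.disjoint_left.2 fun _ hk hl =>
    hkl ((floor_eq_of_mem_gridCell hr hk).symm.trans (floor_eq_of_mem_gridCell hr hl))

theorem gridCell_subset_closedBall (k : ℕ) : gridCell r k ⊆ closedBall (2 * r * k + r) r := by
  intro y hy
  rw [Real.closedBall_eq_Icc]
  exact ⟨by linarith [hy.1], by linarith [hy.2]⟩

theorem volume_gridCell (k : ℕ) : volume (gridCell r k) = ENNReal.ofReal (2 * r) := by
  rw [gridCell, Real.volume_Ico]
  ring_nf

end GridCells

open scoped Classical in
def meetingCells (r : ℝ) (E : Set ℝ) : Finset ℕ :=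
  (Finset.range (⌊1 / (2 * r)⌋₊ + 1)).filter fun k => (gridCell r k ∩ E).Nonempty

open scoped Classical in
def freeCells (r : ℝ) (U : ℕ → Set ℝ) (L : Finset ℕ) : Finset ℕ :=
  (Finset.range (⌊1 / (2 * r)⌋₊ + 1)).filter fun k =>
    2 * r * (k + 1) ≤ 1 ∧ ∀ j ∈ L, Disjoint (gridCell r k) (U j)

section UpperBound

variable {a c : ℕ → ℝ} {r : ℝ}

theorem subset_iUnion_meetingCells (hr : 0 < r) {E : Set ℝ} (hE : E ⊆ Icc 0 1) :
    E ⊆ ⋃ k ∈ meetingCells r E, gridCell r k := by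
  classical
  intro y hy
  have hyk := mem_gridCell_floor hr (hE hy).1
  refine mem_biUnion (Finset.mem_filter.2 ⟨Finset.mem_range_succ_iff.2 ?_, y, hyk, hy⟩) hyk
  exact Nat.floor_le_floor (div_le_div_of_nonneg_right (hE hy).2 (by positivity))

theorem meetingCells_gapComplement_subset (hr : 0 < r) (L : Finset ℕ) :
    meetingCells r (gapComplement a c) ⊆
      (L.biUnion fun j => {⌊c j / (2 * r)⌋₊, ⌊(c j + a (j + 1)) / (2 * r)⌋₊}) ∪
        {⌊1 / (2 * r)⌋₊} ∪ freeCells r (gap a c) L := by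
  classical
  intro k hk
  obtain ⟨hkN, e, he, heE⟩ := Finset.mem_filter.1 hk
  simp only [Finset.mem_union, Finset.mem_singleton, Finset.mem_biUnion, Finset.mem_insert]
  by_cases hk1 : 2 * r * (k + 1) ≤ 1
  swap
  · refine .inl (.inr (le_antisymm (Finset.mem_range_succ_iff.1 hkN) ?_))
    rw [← Nat.lt_succ_iff, Nat.floor_lt (by positivity), div_lt_iff₀ (by positivity)]
    push_cast
    linarith
  by_cases hfree : ∀ j ∈ L, Disjoint (gridCell r k) (gap a c j)
  · exact .inr (Finset.mem_filter.2 ⟨hkN, hk1, hfree⟩)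
  obtain ⟨j, hj, hmeet⟩ := not_forall₂.1 hfree
  obtain ⟨p, hpk, hpj⟩ := Set.not_disjoint_iff.1 hmeet
  have heU : e ∉ gap a c j := fun h => heE.2 (mem_iUnion_of_mem j h)
  refine .inl (.inl ⟨j, hj, ?_⟩)
  rcases ordConnected_Ico.left_mem_or_right_mem he hpk heU hpj with h | h
  · exact .inl (floor_eq_of_mem_gridCell hr h).symm
  · exact .inr (floor_eq_of_mem_gridCell hr h).symm

theorem card_meetingCells_le (hr : 0 < r) (L : Finset ℕ) :
    (meetingCells r (gapComplement a c)).card ≤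
      2 * L.card + 1 + (freeCells r (gap a c) L).card := by
  refine (Finset.card_le_card (meetingCells_gapComplement_subset hr L)).trans <|
    (Finset.card_union_le _ _).trans (add_le_add_left ?_ _)
  refine (Finset.card_union_le _ _).trans (add_le_add ?_ (Finset.card_singleton _).le)
  refine Finset.card_biUnion_le.trans ?_
  exact (Finset.sum_le_sum fun j _ => Finset.card_le_two).trans (by simp [mul_comm])

theorem card_freeCells_mul_add_sum_le_one (hr : 0 < r) (hc : ∀ j, 0 ≤ c j ∧ c j + a (j + 1) ≤ 1)
    (hdisj : Pairwise (Disjoint on gap a c)) {L : Finset ℕ} (hL : ∀ j ∈ L, 0 ≤ a (j + 1)) :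
    (freeCells r (gap a c) L).card * (2 * r) + ∑ j ∈ L, a (j + 1) ≤ 1 := by
  classical
  set K := freeCells r (gap a c) L
  have hK : ∀ k ∈ K, 2 * r * (k + 1) ≤ 1 ∧ ∀ j ∈ L, Disjoint (gridCell r k) (gap a c j) :=
    fun k hk => (Finset.mem_filter.1 hk).2
  have hcells : ⋃ k ∈ K, gridCell r k ⊆ Icc 0 1 := iUnion₂_subset fun k hk y hy =>
    ⟨(by positivity : (0 : ℝ) ≤ 2 * r * k).trans hy.1, hy.2.le.trans (hK k hk).1⟩
  have hgaps : ⋃ j ∈ L, gap a c j ⊆ Icc 0 1 := iUnion₂_subset fun j _ => gap_subset_Icc hc j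
  have hsep : Disjoint (⋃ k ∈ K, gridCell r k) (⋃ j ∈ L, gap a c j) :=
    disjoint_iUnion₂_left.2 fun k hk => disjoint_iUnion₂_right.2 (hK k hk).2
  have hvol : (K.card : ℝ≥0∞) * ENNReal.ofReal (2 * r) + ∑ j ∈ L, ENNReal.ofReal (a (j + 1)) ≤ 1 :=
    calc (K.card : ℝ≥0∞) * ENNReal.ofReal (2 * r) + ∑ j ∈ L, ENNReal.ofReal (a (j + 1))
        = volume (⋃ k ∈ K, gridCell r k) + volume (⋃ j ∈ L, gap a c j) := by
          rw [measure_biUnion_finset (fun k _ l _ hkl => pairwise_disjoint_gridCell hr hkl)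
              fun _ _ => measurableSet_Ico,
            measure_biUnion_finset (fun i _ j _ hij => hdisj hij) fun _ _ => measurableSet_Ioo]
          simp only [volume_gridCell, gap, Real.volume_Ioo, add_sub_cancel_left,
            Finset.sum_const, nsmul_eq_mul]
      _ = volume ((⋃ k ∈ K, gridCell r k) ∪ ⋃ j ∈ L, gap a c j) :=
          (measure_union hsep (Finset.measurableSet_biUnion _ fun _ _ => measurableSet_Ioo)).symm
      _ ≤ volume (Icc (0 : ℝ) 1) := measure_mono (union_subset hcells hgaps)
      _ = 1 := by simp
  rw [← ENNReal.ofReal_natCast, ← ENNReal.ofReal_mul (Nat.cast_nonneg _),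
    ← ENNReal.ofReal_sum_of_nonneg hL, ← ENNReal.ofReal_add (by positivity)
      (Finset.sum_nonneg hL), ENNReal.ofReal_le_one] at hvol
  exact hvol

theorem exists_finset_cover_gapComplement (hr : 0 < r) (hc : ∀ j, 0 ≤ c j ∧ c j + a (j + 1) ≤ 1)
    (hdisj : Pairwise (Disjoint on gap a c)) {L : Finset ℕ} (hL : ∀ j ∈ L, 0 ≤ a (j + 1)) :
    ∃ s : Finset ℝ, gapComplement a c ⊆ ⋃ x ∈ s, closedBall x r ∧
      (s.card : ℝ) * (2 * r) + ∑ j ∈ L, a (j + 1) ≤ (2 * L.card + 1) * (2 * r) + 1 := by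
  set S := meetingCells r (gapComplement a c)
  refine ⟨S.image fun k : ℕ => 2 * r * k + r, ?_, ?_⟩
  · refine (subset_iUnion_meetingCells hr sdiff_subset).trans (iUnion₂_subset fun k hk => ?_)
    exact (gridCell_subset_closedBall k).trans
      (subset_biUnion_of_mem (u := fun x => closedBall x r) (Finset.mem_image_of_mem _ hk))
  · have hcard : ((S.image fun k : ℕ => 2 * r * k + r).card : ℝ) ≤
        2 * L.card + 1 + (freeCells r (gap a c) L).card := by
      exact_mod_cast Finset.card_image_le.trans (card_meetingCells_le hr L)
    nlinarith [card_freeCells_mul_add_sum_le_one hr hc hdisj hL]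

end UpperBound

section LowerBound

variable {a c : ℕ → ℝ} {r : ℝ}

theorem card_le_card_of_gapComplement_subset (hr : 0 ≤ r) (hc : ∀ j, 0 ≤ c j ∧ c j + a (j + 1) ≤ 1)
    (hdisj : Pairwise (Disjoint on gap a c)) {L : Finset ℕ} (hL : ∀ j ∈ L, 2 * r < a (j + 1))
    {t : Finset ℝ} (ht : gapComplement a c ⊆ ⋃ x ∈ t, closedBall x r) : L.card ≤ t.card :=
  Finset.card_le_card_of_forall_lt_dist
    (fun j hj => exists_dist_le_of_subset_iUnion_closedBall ht
      (left_mem_gapComplement hc hdisj (by linarith [hL j hj])))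
    fun i hi j hj hij => dist_lt_of_mem_gap_of_lt hdisj hij (by positivity) (hL i hi) (hL j hj)

theorem Icc_subset_union_gap_closedBall (hr : 0 ≤ r) (hc : ∀ j, 0 ≤ c j ∧ c j + a (j + 1) ≤ 1)
    (hdisj : Pairwise (Disjoint on gap a c)) {L : Finset ℕ} (hL : ∀ j ∉ L, a (j + 1) ≤ 2 * r)
    {t : Finset ℝ} (ht : gapComplement a c ⊆ ⋃ x ∈ t, closedBall x r) :
    Icc 0 1 ⊆ (⋃ j ∈ L, gap a c j) ∪ ⋃ x ∈ t, closedBall x (3 * r) := by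
  intro y hy
  by_cases hyE : y ∈ gapComplement a c
  · exact .inr (iUnion₂_mono (fun x _ => closedBall_subset_closedBall (by linarith)) (ht hyE))
  obtain ⟨j, hj⟩ := mem_iUnion.1 (of_not_not fun h => hyE ⟨hy, h⟩)
  by_cases hjL : j ∈ L
  · exact .inl (mem_biUnion hjL hj)
  obtain ⟨x, hxt, hx⟩ := exists_dist_le_of_subset_iUnion_closedBall ht
    (left_mem_gapComplement hc hdisj (by linarith [hj.1, hj.2]))
  refine .inr (mem_biUnion hxt ?_)
  have hyc : dist y (c j) ≤ 2 * r := by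
    rw [Real.dist_eq, abs_le]
    constructor <;> linarith [hj.1, hj.2, hL j hjL]
  exact mem_closedBall.2 (by linarith [dist_triangle y (c j) x])

theorem one_le_sum_add_card_mul (hr : 0 ≤ r) (hc : ∀ j, 0 ≤ c j ∧ c j + a (j + 1) ≤ 1)
    (hdisj : Pairwise (Disjoint on gap a c)) {L : Finset ℕ} (hL : ∀ j, j ∈ L ↔ 2 * r < a (j + 1))
    {t : Finset ℝ} (ht : gapComplement a c ⊆ ⋃ x ∈ t, closedBall x r) :
    1 ≤ ∑ j ∈ L, a (j + 1) + t.card * (6 * r) := by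
  have hpos : ∀ j ∈ L, 0 ≤ a (j + 1) := fun j hj => by linarith [(hL j).1 hj]
  have hcover := Icc_subset_union_gap_closedBall hr hc hdisj
    (fun j hj => not_lt.1 fun h => hj ((hL j).2 h)) ht
  have hvol : (1 : ℝ≥0∞) ≤ ∑ j ∈ L, ENNReal.ofReal (a (j + 1)) + t.card * ENNReal.ofReal (6 * r) :=
    calc (1 : ℝ≥0∞) = volume (Icc (0 : ℝ) 1) := by simp
      _ ≤ volume (⋃ j ∈ L, gap a c j) + volume (⋃ x ∈ t, closedBall x (3 * r)) :=
          (measure_mono hcover).trans (measure_union_le _ _)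
      _ ≤ ∑ j ∈ L, volume (gap a c j) + ∑ x ∈ t, volume (closedBall x (3 * r)) :=
          add_le_add (measure_biUnion_finset_le _ _) (measure_biUnion_finset_le _ _)
      _ = ∑ j ∈ L, ENNReal.ofReal (a (j + 1)) + t.card * ENNReal.ofReal (6 * r) := by
          simp only [gap, Real.volume_Ioo, add_sub_cancel_left, Real.volume_closedBall,
            Finset.sum_const, nsmul_eq_mul]
          ring_nf
  rw [← ENNReal.ofReal_natCast, ← ENNReal.ofReal_mul (Nat.cast_nonneg _),
    ← ENNReal.ofReal_sum_of_nonneg hpos, ← ENNReal.ofReal_add (Finset.sum_nonneg hpos)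
      (by positivity), ENNReal.one_le_ofReal] at hvol
  exact hvol

end LowerBound

theorem IsComplementarySet.coverNumber_le_six_mul {a : ℕ → ℝ}
    (hsum : Summable fun j : ℕ => a (j + 1)) {F G : Set ℝ} (hF : IsComplementarySet a F)
    (hG : IsComplementarySet a G) {r : ℝ} (hr : 0 < r) :
    coverNumber r F ≤ 6 * coverNumber r G := by
  obtain ⟨c, hc, hcd, rfl⟩ := isComplementarySet_iff.1 hF
  obtain ⟨d, hd, hdd, rfl⟩ := isComplementarySet_iff.1 hG
  obtain ⟨L, hL⟩ := hsum.exists_finset_mem_iff_lt (by positivity : (0 : ℝ) < 2 * r)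
  have hLpos : ∀ j ∈ L, 0 ≤ a (j + 1) := fun j hj => by linarith [(hL j).1 hj]
  obtain ⟨s, hs, hs_card⟩ := exists_finset_cover_gapComplement hr hc hcd hLpos
  refine le_mul_coverNumber_of_forall (k := 6) (by norm_num) fun t ht => ⟨s, hs, ?_⟩
  have hLt : (L.card : ℝ) ≤ t.card := by
    exact_mod_cast card_le_card_of_gapComplement_subset hr.le hd hdd (fun j => (hL j).1) ht
  have hvol := one_le_sum_add_card_mul hr.le hd hdd hL ht
  obtain ⟨x, hx, -⟩ := exists_dist_le_of_subset_iUnion_closedBall ht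
    (zero_mem_gapComplement fun j => (hd j).1)
  have ht1 : (1 : ℝ) ≤ t.card := by exact_mod_cast Finset.card_pos.2 ⟨x, hx⟩
  have : (s.card : ℝ) * (2 * r) ≤ 6 * t.card * (2 * r) := by nlinarith
  exact_mod_cast le_of_mul_le_mul_right this (by positivity)

theorem coverNumber_complementarySets_comparable_general (a : ℕ → ℝ)
    (hsum : Summable fun j : ℕ => a (j + 1))
    (F G : Set ℝ) (hF : IsComplementarySet a F) (hG : IsComplementarySet a G)
    (r : ℝ) (hr : 0 < r) :
    coverNumber r F ≤ 16 * coverNumber r G ∧ coverNumber r G ≤ 16 * coverNumber r F := by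
  have h6 : (6 : ℝ≥0∞) ≤ 16 := by norm_num
  exact ⟨(hF.coverNumber_le_six_mul hsum hG hr).trans (mul_le_mul_left h6 _),
    (hG.coverNumber_le_six_mul hsum hF hr).trans (mul_le_mul_left h6 _)⟩

/-- Any two complementary sets of a decreasing summable sequence have comparable covering
numbers: `1/16 ≤ N_r(F)/N_r(G) ≤ 16` for every `r > 0`. -/
theorem coverNumber_complementarySets_comparable (a : ℕ → ℝ)
    (hpos : ∀ j : ℕ, 0 < a (j + 1)) (hdec : ∀ j : ℕ, a (j + 2) ≤ a (j + 1))
    (hsum : Summable fun j : ℕ => a (j + 1)) (htot : ∑' j : ℕ, a (j + 1) = 1)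
    (F G : Set ℝ) (hF : IsComplementarySet a F) (hG : IsComplementarySet a G)
    (r : ℝ) (hr : 0 < r) :
    coverNumber r F ≤ 16 * coverNumber r G ∧ coverNumber r G ≤ 16 * coverNumber r F :=
  coverNumber_complementarySets_comparable_general a hsum F G hF hG r hr

end
end
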